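/- arXiv:math/0012024 — 4 statements merged into one kernel-verified Lean document; each statement's English description precedes it below -/
import Mathlib

section
/- For positive integers s₁,…,s_r and complex numbers z₁,…,z_r each of modulus at most 1, with (s₁,z₁) ≠ (1,1), the series ∑_{n₁>n₂>⋯>n_r>0} z₁^{n₁}⋯z_r^{n_r}/(n₁^{s₁}⋯n_r^{s_r}) converges. -/
open Filter

/-- The index set of the multiple polylogarithm: strictly decreasing tuples
`n 0 > n 1 > ⋯ > n (r-1) > 0` of positive integers. -/
def IsAdmissible {r : ℕ} (n : Fin r → ℕ) : Prop :=
  (∀ i j : Fin r, i < j → n j < n i) ∧ ∀ i, 0 < n i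

open Classical in
/-- The general term of the multiple polylogarithm series, extended by 0 outside the
admissible index set. -/
noncomputable def polylogTerm {r : ℕ} (s : Fin r → ℕ) (z : Fin r → ℂ)
    (n : Fin r → ℕ) : ℂ :=
  if IsAdmissible n then (∏ i, z i ^ n i) / ∏ i, (n i : ℂ) ^ s i else 0

/-- The partial sum of the multiple polylogarithm series over all indices `≤ N`. -/
noncomputable def polylogPartial {r : ℕ} (s : Fin r → ℕ) (z : Fin r → ℂ) (N : ℕ) : ℂ :=
  ∑ n ∈ Fintype.piFinset fun _ : Fin r => Finset.range (N + 1), polylogTerm s z n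

namespace PolylogAux

noncomputable def w (m : ℕ) : ℝ := if m = 0 then 0 else (m : ℝ)⁻¹

lemma w_nonneg (m : ℕ) : 0 ≤ w m := by
  unfold w; split_ifs <;> positivity

lemma sum_w_le (N : ℕ) : ∑ x ∈ Finset.range (N + 1), w x ≤ 1 + Real.log (N + 1) := by
  have h1 : ∑ x ∈ Finset.range (N + 1), w x = ((harmonic N : ℚ) : ℝ) := by
    rw [Finset.sum_range_succ']
    have : w 0 = 0 := rfl
    rw [this, add_zero, harmonic]
    push_cast
    refine Finset.sum_congr rfl fun i _ => ?_
    unfold w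
    rw [if_neg (Nat.succ_ne_zero i)]
    push_cast
    ring
  rw [h1]
  refine (harmonic_le_one_add_log N).trans ?_
  have : Real.log N ≤ Real.log (N + 1) := by
    rcases Nat.eq_zero_or_pos N with h | h
    · simp [h]
    · exact Real.log_le_log (by positivity) (by push_cast; linarith)
  linarith

lemma norm_polylogTerm_le {r : ℕ} (s : Fin r → ℕ) (z : Fin r → ℂ)
    (hs : ∀ i, 0 < s i) (hz : ∀ i, ‖z i‖ ≤ 1) (n : Fin r → ℕ) :
    ‖polylogTerm s z n‖ ≤ ∏ i, w (n i) := by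
  unfold polylogTerm
  split_ifs with h
  · obtain ⟨-, hpos⟩ := h
    have hw : ∀ i : Fin r, w (n i) = ((n i : ℝ))⁻¹ := fun i => if_neg (hpos i).ne'
    have hnum : ‖∏ i, z i ^ n i‖ ≤ 1 := by
      rw [norm_prod]
      refine Finset.prod_le_one (fun i _ => by positivity) fun i _ => ?_
      rw [norm_pow]
      exact pow_le_one₀ (norm_nonneg _) (hz i)
    have hprodpos : (0:ℝ) < ∏ i, (n i : ℝ) :=
      Finset.prod_pos fun i _ => by exact_mod_cast hpos i
    have hden : ∏ i, (n i : ℝ) ≤ ‖∏ i, ((n i : ℂ)) ^ s i‖ := by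
      rw [norm_prod]
      refine Finset.prod_le_prod (fun i _ => Nat.cast_nonneg _) fun i _ => ?_
      rw [norm_pow, Complex.norm_natCast]
      calc ((n i : ℝ)) = (n i : ℝ) ^ 1 := (pow_one _).symm
        _ ≤ (n i : ℝ) ^ s i := by
            apply pow_le_pow_right₀ _ (hs i)
            exact_mod_cast hpos i
    rw [norm_div]
    calc ‖∏ i, z i ^ n i‖ / ‖∏ i, ((n i : ℂ)) ^ s i‖ ≤ 1 / ∏ i, (n i : ℝ) := by
          apply div_le_div₀ zero_le_one hnum hprodpos hden
      _ = ∏ i, ((n i : ℝ))⁻¹ := by rw [one_div, ← Finset.prod_inv_distrib]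
      _ = ∏ i, w (n i) := by exact Finset.prod_congr rfl fun i _ => (hw i).symm
  · rw [norm_zero]
    exact Finset.prod_nonneg fun i _ => w_nonneg _

lemma norm_polylogPartial_le {r : ℕ} (s : Fin r → ℕ) (z : Fin r → ℂ)
    (hs : ∀ i, 0 < s i) (hz : ∀ i, ‖z i‖ ≤ 1) (N : ℕ) :
    ‖polylogPartial s z N‖ ≤ (1 + Real.log (N + 1)) ^ r := by
  have hw : (0:ℝ) ≤ ∑ x ∈ Finset.range (N + 1), w x :=
    Finset.sum_nonneg fun i _ => w_nonneg i
  calc ‖polylogPartial s z N‖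
      ≤ ∑ n ∈ Fintype.piFinset fun _ : Fin r => Finset.range (N + 1), ‖polylogTerm s z n‖ :=
        norm_sum_le _ _
    _ ≤ ∑ n ∈ Fintype.piFinset fun _ : Fin r => Finset.range (N + 1), ∏ i, w (n i) :=
        Finset.sum_le_sum fun n _ => norm_polylogTerm_le s z hs hz n
    _ = ∏ _i : Fin r, ∑ x ∈ Finset.range (N + 1), w x :=
        (Finset.prod_univ_sum _ _).symm
    _ = (∑ x ∈ Finset.range (N + 1), w x) ^ r := by
        rw [Finset.prod_const, Finset.card_univ, Fintype.card_fin]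
    _ ≤ (1 + Real.log (N + 1)) ^ r := pow_le_pow_left₀ hw (sum_w_le N) r


lemma isAdmissible_cons {r : ℕ} {a : ℕ} {t : Fin r → ℕ} :
    IsAdmissible (Fin.cons a t) ↔ 0 < a ∧ (∀ i, t i < a) ∧ IsAdmissible t := by
  constructor
  · rintro ⟨hdec, hpos⟩
    refine ⟨by simpa using hpos 0, fun i => ?_, fun i j hij => ?_, fun i => by simpa using hpos i.succ⟩
    · simpa using hdec 0 i.succ (Fin.succ_pos i)
    · simpa using hdec i.succ j.succ (by simpa using hij)
  · rintro ⟨ha, hlt, hdec, hpos⟩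
    constructor
    · intro i j hij
      rcases Fin.eq_zero_or_eq_succ j with rfl | ⟨j', rfl⟩
      · exact absurd hij (by simp)
      rcases Fin.eq_zero_or_eq_succ i with rfl | ⟨i', rfl⟩
      · simpa using hlt j'
      · simpa using hdec i' j' (by simpa using hij)
    · intro i
      rcases Fin.eq_zero_or_eq_succ i with rfl | ⟨i', rfl⟩
      · simpa using ha
      · simpa using hpos i'

lemma polylogPartial_succ {r : ℕ} (s : Fin (r + 1) → ℕ) (z : Fin (r + 1) → ℂ)
    (hs0 : 0 < s 0) (N : ℕ) :
    polylogPartial s z N = ∑ a ∈ Finset.range (N + 1),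
      (z 0 ^ a / (a : ℂ) ^ (s 0)) *
        polylogPartial (fun i => s i.succ) (fun i => z i.succ) (a - 1) := by
  have key : polylogPartial s z N =
      ∑ p ∈ (Finset.range (N + 1)) ×ˢ (Fintype.piFinset fun _ : Fin r => Finset.range (N + 1)),
        polylogTerm s z (Fin.cons p.1 p.2) := by
    rw [polylogPartial]
    refine Finset.sum_nbij' (fun n => ((n 0 : ℕ), fun i : Fin r => n i.succ))
      (fun p => Fin.cons p.1 p.2) ?_ ?_ ?_ ?_ ?_
    · intro n hn
      rw [Fintype.mem_piFinset] at hn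
      exact Finset.mem_product.2 ⟨hn 0, Fintype.mem_piFinset.2 fun i => hn i.succ⟩
    · intro p hp
      obtain ⟨h1, h2⟩ := Finset.mem_product.1 hp
      rw [Fintype.mem_piFinset] at h2 ⊢
      intro i
      rcases Fin.eq_zero_or_eq_succ i with rfl | ⟨i', rfl⟩
      · simpa using h1
      · simpa using h2 i'
    · intro n _
      exact Fin.cons_self_tail n
    · intro p _
      simp
    · intro n _
      exact congrArg (polylogTerm s z) (Fin.cons_self_tail n).symm
  rw [key, Finset.sum_product]
  refine Finset.sum_congr rfl fun a ha => ?_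
  rw [Finset.mem_range] at ha
  rcases Nat.eq_zero_or_pos a with rfl | hapos
  · rw [show ((0:ℕ):ℂ) ^ s 0 = 0 from by rw [Nat.cast_zero]; exact zero_pow hs0.ne',
      div_zero, zero_mul]
    refine Finset.sum_eq_zero fun t _ => ?_
    rw [polylogTerm, if_neg]
    rw [isAdmissible_cons]
    rintro ⟨h0, -, -⟩
    exact lt_irrefl 0 h0
  · have hsub : (Fintype.piFinset fun _ : Fin r => Finset.range a) ⊆
        (Fintype.piFinset fun _ : Fin r => Finset.range (N + 1)) :=
      Fintype.piFinset_subset _ _ fun _ => Finset.range_subset_range.2 (by omega)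
    have hvanish : ∀ t ∈ (Fintype.piFinset fun _ : Fin r => Finset.range (N + 1)),
        t ∉ (Fintype.piFinset fun _ : Fin r => Finset.range a) →
        polylogTerm s z (Fin.cons a t) = 0 := by
      intro t _ hnt
      rw [Fintype.mem_piFinset] at hnt
      push_neg at hnt
      obtain ⟨i, hi⟩ := hnt
      rw [Finset.mem_range, not_lt] at hi
      rw [polylogTerm, if_neg]
      rw [isAdmissible_cons]
      rintro ⟨-, hlt, -⟩
      exact absurd (hlt i) (by omega)
    rw [← Finset.sum_subset hsub hvanish]
    have hterm : ∀ t ∈ (Fintype.piFinset fun _ : Fin r => Finset.range a),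
        polylogTerm s z (Fin.cons a t) =
          (z 0 ^ a / (a : ℂ) ^ (s 0)) *
            polylogTerm (fun i => s i.succ) (fun i => z i.succ) t := by
      intro t ht
      rw [Fintype.mem_piFinset] at ht
      have hlt : ∀ i, t i < a := fun i => Finset.mem_range.1 (ht i)
      rw [polylogTerm, polylogTerm]
      by_cases hadm : IsAdmissible t
      · rw [if_pos (isAdmissible_cons.2 ⟨hapos, hlt, hadm⟩), if_pos hadm]
        rw [Fin.prod_univ_succ, Fin.prod_univ_succ]
        simp only [Fin.cons_zero, Fin.cons_succ]
        rw [mul_div_mul_comm]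
      · rw [if_neg (fun h => hadm (isAdmissible_cons.1 h).2.2), if_neg hadm, mul_zero]
    rw [Finset.sum_congr rfl hterm, ← Finset.mul_sum]
    have ha1 : a - 1 + 1 = a := by omega
    rw [polylogPartial, ha1]




lemma pow_log_le (k : ℕ) {x : ℝ} (hx : 1 ≤ x) :
    (1 + Real.log x) ^ k ≤ (2 * k + 3 : ℝ) ^ k * x ^ ((1:ℝ)/2) := by
  have hx0 : (0:ℝ) < x := lt_of_lt_of_le one_pos hx
  set ε : ℝ := 1 / (2 * k + 2) with hε_def
  have hε : 0 < ε := by positivity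
  have hlogx : 0 ≤ Real.log x := Real.log_nonneg hx
  have hxε_pos : 0 < x ^ ε := Real.rpow_pos_of_pos hx0 ε
  have h1 : Real.log x = (2 * k + 2) * Real.log (x ^ ε) := by
    rw [Real.log_rpow hx0, hε_def]
    field_simp
  have h2 : Real.log (x ^ ε) ≤ x ^ ε :=
    (Real.log_le_sub_one_of_pos hxε_pos).trans (by linarith)
  have h3 : (1:ℝ) ≤ x ^ ε := Real.one_le_rpow hx hε.le
  have h4 : 1 + Real.log x ≤ (2 * k + 3) * x ^ ε := by
    rw [h1]
    have hk2 : (0:ℝ) ≤ 2 * k + 2 := by positivity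
    nlinarith
  calc (1 + Real.log x) ^ k ≤ ((2 * k + 3) * x ^ ε) ^ k :=
        pow_le_pow_left₀ (by linarith) h4 k
    _ = (2 * k + 3 : ℝ) ^ k * (x ^ ε) ^ k := mul_pow _ _ _
    _ = (2 * k + 3 : ℝ) ^ k * x ^ (ε * k) := by
        rw [← Real.rpow_natCast (x ^ ε) k, ← Real.rpow_mul hx0.le]
    _ ≤ (2 * k + 3 : ℝ) ^ k * x ^ ((1:ℝ)/2) := by
        have hεk : ε * k ≤ (1:ℝ)/2 := by
          rw [hε_def, div_mul_eq_mul_div, one_mul, div_le_div_iff₀ (by positivity) (by norm_num)]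
          push_cast
          nlinarith [Nat.cast_nonneg (α := ℝ) k]
        exact mul_le_mul_of_nonneg_left
          (Real.rpow_le_rpow_of_exponent_le hx hεk) (by positivity)

lemma polylogPartial_sub {r : ℕ} (s : Fin r → ℕ) (z : Fin r → ℂ)
    (hs : ∀ i, 0 < s i) (hz : ∀ i, ‖z i‖ ≤ 1) (m : ℕ) :
    ‖polylogPartial s z (m + 1) - polylogPartial s z m‖
      ≤ (1 + Real.log (m + 2)) ^ r / (m + 1) := by
  have hlog2 : (0:ℝ) ≤ Real.log (m + 2) := Real.log_nonneg (by push_cast; linarith)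
  cases r with
  | zero =>
      have hconst : ∀ N : ℕ, polylogPartial (r := 0) s z N = polylogTerm s z ![] := by
        intro N
        rw [polylogPartial]
        rw [show (Fintype.piFinset fun _ : Fin 0 => Finset.range (N + 1)) = {![]} from by
          ext f
          simp only [Fintype.mem_piFinset, Finset.mem_singleton]
          exact iff_of_true (fun i => i.elim0) (funext fun i => i.elim0)]
        rw [Finset.sum_singleton]
      rw [hconst, hconst, sub_self, norm_zero]
      positivity
  | succ k =>
      rw [polylogPartial_succ s z (hs 0) (m + 1), polylogPartial_succ s z (hs 0) m,
        Finset.sum_range_succ, add_sub_cancel_left]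
      have hcast : ‖((m + 1 : ℕ) : ℂ) ^ (s 0)‖ = ((m + 1 : ℕ) : ℝ) ^ (s 0) := by
        rw [norm_pow, Complex.norm_natCast]
      rw [norm_mul, norm_div, norm_pow, hcast]
      have h1 : ‖z 0‖ ^ (m + 1) ≤ 1 := pow_le_one₀ (norm_nonneg _) (hz 0)
      have h2 : ((m:ℝ) + 1) ≤ ((m + 1 : ℕ) : ℝ) ^ (s 0) := by
        calc ((m:ℝ) + 1) = ((m + 1 : ℕ) : ℝ) ^ 1 := by push_cast; ring
          _ ≤ ((m + 1 : ℕ) : ℝ) ^ (s 0) := by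
              apply pow_le_pow_right₀ (by push_cast; linarith) (hs 0)
      have h3 : ‖polylogPartial (fun i => s i.succ) (fun i => z i.succ) (m + 1 - 1)‖
          ≤ (1 + Real.log (m + 2)) ^ k := by
        have h30 := norm_polylogPartial_le (fun i => s i.succ) (fun i => z i.succ)
          (fun i => hs i.succ) (fun i => hz i.succ) (m + 1 - 1)
        simp only [Nat.add_sub_cancel] at h30
        refine h30.trans ?_
        have hlog1 : (0:ℝ) ≤ Real.log ((m:ℝ) + 1) := Real.log_nonneg (by norm_num)
        apply pow_le_pow_left₀ (by linarith)
        have : Real.log ((m:ℝ) + 1) ≤ Real.log ((m:ℝ) + 2) :=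
          Real.log_le_log (by positivity) (by linarith)
        linarith
      have h4 : (1 + Real.log (m + 2)) ^ k ≤ (1 + Real.log (m + 2)) ^ (k + 1) :=
        pow_le_pow_right₀ (by linarith) (by omega)
      calc ‖z 0‖ ^ (m+1) / ((m + 1 : ℕ) : ℝ) ^ (s 0) *
            ‖polylogPartial (fun i => s i.succ) (fun i => z i.succ) (m + 1 - 1)‖
          ≤ 1 / ((m:ℝ) + 1) * (1 + Real.log (m + 2)) ^ (k+1) := by
            apply mul_le_mul
            · apply div_le_div₀ zero_le_one h1 (by positivity) h2
            · exact h3.trans h4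
            · exact norm_nonneg _
            · positivity
        _ = (1 + Real.log (m + 2)) ^ (k+1) / (m + 1) := by ring



lemma rpow_bound2 {x : ℝ} (hx : 1 ≤ x) :
    x ^ ((1:ℝ)/2) / (x * (x + 1)) ≤ x ^ (-(3/2) : ℝ) := by
  have hx0 : (0:ℝ) < x := by linarith
  calc x ^ ((1:ℝ)/2) / (x * (x + 1)) ≤ x ^ ((1:ℝ)/2) / (x * x) :=
        div_le_div_of_nonneg_left (Real.rpow_nonneg hx0.le _) (by positivity) (by nlinarith)
    _ = x ^ (-(3/2) : ℝ) := by
        rw [show x * x = x ^ ((2:ℕ):ℝ) from by rw [Real.rpow_natCast]; ring,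
          ← Real.rpow_sub hx0]
        norm_num

lemma rpow_bound1 {x : ℝ} (hx : 1 ≤ x) :
    (x + 1) ^ ((1:ℝ)/2) / (x * (x + 1)) ≤ x ^ (-(3/2) : ℝ) := by
  have hx0 : (0:ℝ) < x := by linarith
  have hx1 : (0:ℝ) < x + 1 := by linarith
  have e1 : (x + 1) ^ ((1:ℝ)/2) / (x + 1) = (x + 1) ^ (-(1/2) : ℝ) := by
    rw [show (-(1/2) : ℝ) = (1:ℝ)/2 - 1 from by norm_num, Real.rpow_sub hx1, Real.rpow_one]
  calc (x + 1) ^ ((1:ℝ)/2) / (x * (x + 1))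
      = ((x + 1) ^ ((1:ℝ)/2) / (x + 1)) / x := by rw [div_div, mul_comm]
    _ = (x + 1) ^ (-(1/2) : ℝ) / x := by rw [e1]
    _ ≤ x ^ (-(1/2) : ℝ) / x :=
        div_le_div₀ (Real.rpow_nonneg hx0.le _)
          (Real.rpow_le_rpow_of_nonpos hx0 (by linarith) (by norm_num)) hx0 le_rfl
    _ = x ^ (-(3/2) : ℝ) := by
        rw [show (-(3/2) : ℝ) = -(1/2) - 1 from by norm_num, Real.rpow_sub hx0, Real.rpow_one]

end PolylogAux

/-- For positive integers `s₁, …, s_r` and complex numbers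
`z₁, …, z_r` of modulus at most 1 with `(s₁, z₁) ≠ (1, 1)`, the series
`∑_{n₁>n₂>⋯>n_r>0} z₁^{n₁}⋯z_r^{n_r}/(n₁^{s₁}⋯n_r^{s_r})` converges. -/
theorem polylog_converges {r : ℕ} (hr : 0 < r) (s : Fin r → ℕ) (z : Fin r → ℂ)
    (hs : ∀ i, 0 < s i) (hz : ∀ i, ‖z i‖ ≤ 1)
    (h11 : ¬(s ⟨0, hr⟩ = 1 ∧ z ⟨0, hr⟩ = 1)) :
    ∃ L : ℂ, Tendsto (polylogPartial s z) atTop (nhds L) := by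
  obtain ⟨k, rfl⟩ : ∃ k, r = k + 1 := ⟨r - 1, by omega⟩
  have h11' : ¬(s 0 = 1 ∧ z 0 = 1) := by
    rwa [show (0 : Fin (k + 1)) = ⟨0, hr⟩ from rfl]
  set Q : ℕ → ℂ := fun m => polylogPartial (fun i => s i.succ) (fun i => z i.succ) m with hQdef
  set c : ℕ → ℂ := fun a => z 0 ^ a / (a : ℂ) ^ (s 0) * Q (a - 1) with hcdef
  have hdecomp : ∀ N, polylogPartial s z N = ∑ a ∈ Finset.range (N + 1), c a :=
    fun N => PolylogAux.polylogPartial_succ s z (hs 0) N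
  set C : ℝ := (2 * (k:ℝ) + 3) ^ k with hCdef
  have hC0 : (0:ℝ) < C := by positivity
  have hQ : ∀ m : ℕ, ‖Q m‖ ≤ (1 + Real.log (m + 1)) ^ k := fun m =>
    PolylogAux.norm_polylogPartial_le _ _ (fun i => hs i.succ) (fun i => hz i.succ) m
  have hQ' : ∀ a : ℕ, 1 ≤ a → ‖Q (a - 1)‖ ≤ C * (a:ℝ) ^ ((1:ℝ)/2) := by
    intro a ha
    have h := hQ (a - 1)
    have hcast : ((a - 1 : ℕ) : ℝ) + 1 = (a : ℝ) := by
      rw [Nat.cast_sub ha, Nat.cast_one]; ring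
    rw [hcast] at h
    exact h.trans (PolylogAux.pow_log_le k (by exact_mod_cast ha))
  have hQd : ∀ a : ℕ, 1 ≤ a →
      ‖Q a - Q (a - 1)‖ ≤ C * ((a:ℝ) + 1) ^ ((1:ℝ)/2) / a := by
    intro a ha
    obtain ⟨m, rfl⟩ : ∃ m, a = m + 1 := ⟨a - 1, by omega⟩
    have h := PolylogAux.polylogPartial_sub (fun i => s i.succ) (fun i => z i.succ)
      (fun i => hs i.succ) (fun i => hz i.succ) m
    simp only [Nat.add_sub_cancel]
    refine h.trans ?_
    have hx : (1:ℝ) ≤ (m:ℝ) + 2 := by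
      have : (0:ℝ) ≤ (m:ℝ) := Nat.cast_nonneg m
      linarith
    have hp := PolylogAux.pow_log_le k hx
    have hcast : ((m + 1 : ℕ) : ℝ) + 1 = (m:ℝ) + 2 := by push_cast; ring
    rw [hcast]
    apply div_le_div₀ (by positivity) hp (by positivity) (by push_cast; linarith)
  rcases eq_or_ne (s 0) 1 with hs1 | hs1
  · -- s 0 = 1 : Abel summation
    have hz1 : z 0 ≠ 1 := fun h => h11' ⟨hs1, h⟩
    set f : ℕ → ℂ := fun n => Q (n - 1) / (n : ℂ) with hfdef
    set g : ℕ → ℂ := fun n => z 0 ^ n with hgdef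
    set G : ℕ → ℂ := fun n => ∑ i ∈ Finset.range n, g i with hGdef
    set d : ℕ → ℂ := fun i => (f (i + 1) - f i) * G (i + 1) with hddef
    have hcfg : ∀ i, c i = f i * g i := by
      intro i
      rw [hcdef, hfdef, hgdef]
      simp only
      rw [hs1, pow_one]
      ring
    set M : ℝ := 2 / ‖z 0 - 1‖ with hMdef
    have hz1' : (0:ℝ) < ‖z 0 - 1‖ := by
      rw [norm_pos_iff]
      exact sub_ne_zero.2 hz1
    have hM0 : 0 ≤ M := by positivity
    have hM : ∀ n, ‖G n‖ ≤ M := by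
      intro n
      rw [hGdef]
      simp only
      rw [hgdef]
      simp only
      rw [geom_sum_eq hz1 n, norm_div]
      have h2 : ‖z 0 ^ n - 1‖ ≤ 2 := by
        calc ‖z 0 ^ n - 1‖ ≤ ‖z 0 ^ n‖ + ‖(1:ℂ)‖ := norm_sub_le _ _
          _ ≤ 1 + 1 := by
              rw [norm_one, norm_pow]
              exact add_le_add_left (pow_le_one₀ (norm_nonneg _) (hz 0)) 1
          _ = 2 := by norm_num
      exact div_le_div₀ (by norm_num) h2 hz1' le_rfl
    have hfN : ∀ a : ℕ, 1 ≤ a → ‖f a‖ ≤ C * (a:ℝ) ^ (-(1/2) : ℝ) := by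
      intro a ha
      have ha1 : (1:ℝ) ≤ (a:ℝ) := by exact_mod_cast ha
      rw [hfdef]
      simp only [norm_div, Complex.norm_natCast]
      calc ‖Q (a - 1)‖ / (a:ℝ) ≤ (C * (a:ℝ) ^ ((1:ℝ)/2)) / (a:ℝ) :=
            div_le_div₀ (by positivity) (hQ' a ha) (by linarith) le_rfl
        _ = C * (a:ℝ) ^ (-(1/2) : ℝ) := by
            rw [mul_div_assoc, show (-(1/2) : ℝ) = (1:ℝ)/2 - 1 from by norm_num,
              Real.rpow_sub (by linarith), Real.rpow_one]
    have h1 : Tendsto (fun N : ℕ => f N * G (N + 1)) atTop (nhds 0) := by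
      rw [tendsto_zero_iff_norm_tendsto_zero]
      refine squeeze_zero' (g := fun N : ℕ => (C * (N:ℝ) ^ (-(1/2) : ℝ)) * M) (Eventually.of_forall fun N => norm_nonneg _) ?_ ?_
      · filter_upwards [eventually_ge_atTop 1] with N hN
        calc ‖f N * G (N + 1)‖ = ‖f N‖ * ‖G (N + 1)‖ := norm_mul _ _
          _ ≤ (C * (N:ℝ) ^ (-(1/2) : ℝ)) * M :=
              mul_le_mul (hfN N hN) (hM (N + 1)) (norm_nonneg _) (by positivity)
      · have h0 : Tendsto (fun N : ℕ => ((N:ℝ)) ^ (-(1/2) : ℝ)) atTop (nhds 0) := by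
          have := (tendsto_rpow_neg_atTop (y := (1/2 : ℝ)) (by norm_num)).comp
            (tendsto_natCast_atTop_atTop (R := ℝ))
          exact this
        have := (h0.const_mul C).mul_const M
        simpa using this
    have hd : Summable d := by
      apply Summable.of_norm_bounded_eventually_nat
        (g := fun i : ℕ => (2 * C * (i:ℝ) ^ (-(3/2) : ℝ)) * M)
      · exact ((Real.summable_nat_rpow.2 (by norm_num)).mul_left (2 * C)).mul_right M
      · filter_upwards [eventually_ge_atTop 1] with i hi
        have ha1 : (1:ℝ) ≤ (i:ℝ) := by exact_mod_cast hi
        have hip : (0:ℝ) < (i:ℝ) := by linarith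
        have hICn : ((i:ℕ) : ℂ) ≠ 0 := Nat.cast_ne_zero.2 (by omega)
        have hICn1 : ((i:ℕ) : ℂ) + 1 ≠ 0 := by
          have : (((i:ℕ) : ℂ) + 1) = ((i + 1 : ℕ) : ℂ) := by push_cast; ring
          rw [this]
          exact Nat.cast_ne_zero.2 (by omega)
        have e : f (i + 1) - f i
            = (Q i - Q (i - 1)) / ((i:ℂ) + 1) + Q (i - 1) * (1/((i:ℂ) + 1) - 1/(i:ℂ)) := by
          rw [hfdef]
          simp only [Nat.add_sub_cancel, Nat.cast_add, Nat.cast_one]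
          field_simp
          ring
        have e2 : ‖(1:ℂ)/((i:ℂ) + 1) - 1/(i:ℂ)‖ = 1 / ((i:ℝ) * ((i:ℝ) + 1)) := by
          have h1 : (1:ℂ)/((i:ℂ) + 1) - 1/(i:ℂ) = -(1 / ((i:ℂ) * ((i:ℂ) + 1))) := by
            field_simp
            ring
          rw [h1, norm_neg, norm_div, norm_one, norm_mul]
          have h2 : ‖((i:ℕ) : ℂ)‖ = (i:ℝ) := Complex.norm_natCast i
          have h3 : ‖((i:ℕ) : ℂ) + 1‖ = (i:ℝ) + 1 := by
            rw [show (((i:ℕ) : ℂ) + 1) = ((i + 1 : ℕ) : ℂ) from by push_cast; ring,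
              Complex.norm_natCast]
            push_cast; ring
          rw [h2, h3]
        have e3 : ‖((i:ℕ) : ℂ) + 1‖ = (i:ℝ) + 1 := by
          rw [show (((i:ℕ) : ℂ) + 1) = ((i + 1 : ℕ) : ℂ) from by push_cast; ring,
            Complex.norm_natCast]
          push_cast; ring
        have key : ‖f (i + 1) - f i‖ ≤ 2 * C * (i:ℝ) ^ (-(3/2) : ℝ) := by
          rw [e]
          calc ‖(Q i - Q (i - 1)) / ((i:ℂ) + 1) + Q (i - 1) * (1/((i:ℂ) + 1) - 1/(i:ℂ))‖
              ≤ ‖(Q i - Q (i - 1)) / ((i:ℂ) + 1)‖ + ‖Q (i - 1) * (1/((i:ℂ) + 1) - 1/(i:ℂ))‖ :=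
                norm_add_le _ _
            _ = ‖Q i - Q (i - 1)‖ / ((i:ℝ) + 1)
                + ‖Q (i - 1)‖ * (1 / ((i:ℝ) * ((i:ℝ) + 1))) := by
                rw [norm_div, norm_mul, e2, e3]
            _ ≤ (C * ((i:ℝ) + 1) ^ ((1:ℝ)/2) / i) / ((i:ℝ) + 1)
                + (C * (i:ℝ) ^ ((1:ℝ)/2)) * (1 / ((i:ℝ) * ((i:ℝ) + 1))) := by
                apply add_le_add
                · exact div_le_div₀ (by positivity) (hQd i hi) (by linarith) le_rfl
                · exact mul_le_mul_of_nonneg_right (hQ' i hi) (by positivity)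
            _ = C * (((i:ℝ) + 1) ^ ((1:ℝ)/2) / ((i:ℝ) * ((i:ℝ) + 1)))
                + C * ((i:ℝ) ^ ((1:ℝ)/2) / ((i:ℝ) * ((i:ℝ) + 1))) := by
                rw [div_div, mul_one_div, mul_div_assoc, mul_div_assoc]
            _ ≤ C * ((i:ℝ) ^ (-(3/2) : ℝ)) + C * ((i:ℝ) ^ (-(3/2) : ℝ)) := by
                apply add_le_add
                · exact mul_le_mul_of_nonneg_left (PolylogAux.rpow_bound1 ha1) hC0.le
                · exact mul_le_mul_of_nonneg_left (PolylogAux.rpow_bound2 ha1) hC0.le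
            _ = 2 * C * (i:ℝ) ^ (-(3/2) : ℝ) := by ring
        calc ‖d i‖ = ‖f (i + 1) - f i‖ * ‖G (i + 1)‖ := by rw [hddef]; exact norm_mul _ _
          _ ≤ (2 * C * (i:ℝ) ^ (-(3/2) : ℝ)) * M :=
              mul_le_mul key (hM (i + 1)) (norm_nonneg _) (by positivity)
    obtain ⟨L2, hL2⟩ := hd
    have h2 : Tendsto (fun N : ℕ => ∑ i ∈ Finset.range N, d i) atTop (nhds L2) :=
      hL2.tendsto_sum_nat
    refine ⟨-L2, ?_⟩
    have habel : ∀ N : ℕ, polylogPartial s z N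
        = f N * G (N + 1) - ∑ i ∈ Finset.range N, d i := by
      intro N
      rw [hdecomp N, Finset.sum_congr rfl (fun i _ => hcfg i)]
      have hbp := Finset.sum_range_by_parts f g (N + 1)
      simp only [smul_eq_mul, Nat.add_sub_cancel] at hbp
      rw [hbp]
    have hlim := h1.sub h2
    rw [zero_sub] at hlim
    exact hlim.congr fun N => (habel N).symm
  · -- s 0 ≥ 2 : absolute convergence
    have hs2 : 2 ≤ s 0 := by have := hs 0; omega
    have hsum : Summable c := by
      apply Summable.of_norm_bounded (g := fun a : ℕ => C * (a:ℝ) ^ (-(3/2) : ℝ))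
        ((Real.summable_nat_rpow.2 (by norm_num)).mul_left C)
      intro a
      rcases Nat.eq_zero_or_pos a with rfl | ha
      · have hc0 : c 0 = 0 := by
          rw [hcdef]
          simp [zero_pow (hs 0).ne']
        rw [hc0, norm_zero, Nat.cast_zero, Real.zero_rpow (by norm_num)]
        simp
      · have ha1 : (1:ℝ) ≤ (a:ℝ) := by exact_mod_cast ha
        have hnorm : ‖c a‖ = ‖z 0‖ ^ a / ((a:ℝ)) ^ (s 0) * ‖Q (a - 1)‖ := by
          rw [hcdef]
          simp only [norm_mul, norm_div, norm_pow, Complex.norm_natCast]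
        have hzp : ‖z 0‖ ^ a ≤ 1 := pow_le_one₀ (norm_nonneg _) (hz 0)
        have hden : ((a:ℝ)) ^ 2 ≤ ((a:ℝ)) ^ (s 0) := pow_le_pow_right₀ ha1 hs2
        calc ‖c a‖ ≤ 1 / (a:ℝ) ^ 2 * (C * (a:ℝ) ^ ((1:ℝ)/2)) := by
              rw [hnorm]
              exact mul_le_mul (div_le_div₀ zero_le_one hzp (by positivity) hden)
                (hQ' a ha) (norm_nonneg _) (by positivity)
          _ = C * ((a:ℝ) ^ ((1:ℝ)/2) / (a:ℝ) ^ 2) := by ring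
          _ = C * (a:ℝ) ^ (-(3/2) : ℝ) := by
              congr 1
              rw [show ((a:ℝ)) ^ 2 = (a:ℝ) ^ ((2:ℕ):ℝ) from by rw [Real.rpow_natCast],
                ← Real.rpow_sub (by linarith)]
              norm_num
    obtain ⟨L, hL⟩ := hsum
    refine ⟨L, ?_⟩
    have h1 := hL.tendsto_sum_nat
    have h2 := h1.comp (tendsto_add_atTop_nat 1)
    exact h2.congr fun N => by
      simp only [Function.comp]
      exact (hdecomp N).symm
end

section
/- The power series ∑_{n₁>n₂>⋯>n_r>0} (z₁^{n₁}⋯z_r^{n_r})/(n₁^{s₁}⋯n_r^{s_r}), viewed as a function of z₁ with z₂,…,z_r fixed of modulus 1, has radius of convergence 1 (for any positive integers s₁,…,s_r). -/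
open Filter

/-- The iterated-sum form of the partial sums of the multiple polylogarithm. -/
noncomputable def Qaux : (r : ℕ) → (Fin r → ℕ) → (Fin r → ℂ) → ℕ → ℂ
  | 0, _, _, _ => 1
  | (r + 1), s, z, m =>
      ∑ n ∈ Finset.Ico 1 m, z 0 ^ n / (n : ℂ) ^ s 0 * Qaux r (Fin.tail s) (Fin.tail z) n

lemma isAdmissible_cons {r : ℕ} (k : ℕ) (t : Fin r → ℕ) :
    IsAdmissible (Fin.cons k t) ↔ 0 < k ∧ (∀ i, t i < k) ∧ IsAdmissible t := by
  constructor
  · rintro ⟨hdec, hpos⟩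
    refine ⟨hpos 0, fun i => ?_, fun i j hij => ?_, fun i => hpos i.succ⟩
    · simpa using hdec 0 i.succ (Fin.succ_pos i)
    · simpa using hdec i.succ j.succ (by simpa using hij)
  · rintro ⟨hk, hlt, hdec, hpos⟩
    constructor
    · intro i j hij
      induction j using Fin.cases with
      | zero => exact absurd hij (Fin.not_lt_zero i)
      | succ j' =>
        induction i using Fin.cases with
        | zero => simpa using hlt j'
        | succ i' => simpa using hdec i' j' (by simpa using hij)
    · intro i
      induction i using Fin.cases with
      | zero => simpa using hk
      | succ i' => simpa using hpos i'

lemma sum_piFinset_polylogTerm :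
    ∀ (r : ℕ) (s : Fin r → ℕ) (z : Fin r → ℂ) (m : ℕ),
      ∑ n ∈ Fintype.piFinset (fun _ : Fin r => Finset.range m), polylogTerm s z n
        = Qaux r s z m := by
  intro r
  induction r with
  | zero =>
    intro s z m
    have h1 : (Fintype.piFinset (fun _ : Fin 0 => Finset.range m)) = {finZeroElim} := by
      ext f
      simp only [Fintype.mem_piFinset, Finset.mem_singleton]
      constructor
      · intro _; exact funext fun i => i.elim0
      · intro _ i; exact i.elim0
    have hadm : IsAdmissible (finZeroElim : Fin 0 → ℕ) :=
      ⟨fun i => i.elim0, fun i => i.elim0⟩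
    rw [h1, Finset.sum_singleton]
    simp [polylogTerm, Qaux, hadm]
    exact ⟨fun i => i.elim0, fun i => i.elim0⟩
  | succ r ih =>
    intro s z m
    have key : ∑ n ∈ Fintype.piFinset (fun _ : Fin (r + 1) => Finset.range m),
          polylogTerm s z n
        = ∑ p ∈ Finset.range m ×ˢ Fintype.piFinset (fun _ : Fin r => Finset.range m),
            polylogTerm s z (Fin.cons p.1 p.2) := by
      refine Finset.sum_nbij' (fun n => (n 0, Fin.tail n)) (fun p => Fin.cons p.1 p.2)
        ?_ ?_ ?_ ?_ ?_
      · intro n hn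
        rw [Fintype.mem_piFinset] at hn
        refine Finset.mem_product.2 ⟨hn 0, ?_⟩
        rw [Fintype.mem_piFinset]
        intro i; exact hn i.succ
      · intro p hp
        rw [Finset.mem_product] at hp
        rw [Fintype.mem_piFinset]
        intro i
        induction i using Fin.cases with
        | zero => simpa using hp.1
        | succ i' =>
          have := Fintype.mem_piFinset.1 hp.2 i'
          simpa using this
      · intro n _; exact Fin.cons_self_tail n
      · intro p _; simp
      · intro n _; rw [Fin.cons_self_tail]
    rw [key, Finset.sum_product]
    have inner_zero : ∑ t ∈ Fintype.piFinset (fun _ : Fin r => Finset.range m),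
        polylogTerm s z (Fin.cons 0 t) = 0 := by
      refine Finset.sum_eq_zero fun t _ => ?_
      have : ¬ IsAdmissible (Fin.cons 0 t) := by
        rw [isAdmissible_cons]; simp
      simp [polylogTerm, this]
    have inner_eq : ∀ k ∈ Finset.Ico 1 m,
        ∑ t ∈ Fintype.piFinset (fun _ : Fin r => Finset.range m),
            polylogTerm s z (Fin.cons k t)
          = z 0 ^ k / (k : ℂ) ^ s 0 * Qaux r (Fin.tail s) (Fin.tail z) k := by
      intro k hk
      rw [Finset.mem_Ico] at hk
      obtain ⟨hk1, hkm⟩ := hk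
      have hsub : Fintype.piFinset (fun _ : Fin r => Finset.range k)
          ⊆ Fintype.piFinset (fun _ : Fin r => Finset.range m) :=
        Fintype.piFinset_subset _ _ fun _ => Finset.range_subset_range.2 hkm.le
      have hvanish : ∀ t ∈ Fintype.piFinset (fun _ : Fin r => Finset.range m),
          t ∉ Fintype.piFinset (fun _ : Fin r => Finset.range k) →
          polylogTerm s z (Fin.cons k t) = 0 := by
        intro t _ ht
        rw [Fintype.mem_piFinset] at ht
        push_neg at ht
        obtain ⟨i, hi⟩ := ht
        have : ¬ IsAdmissible (Fin.cons k t) := by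
          rw [isAdmissible_cons]
          rintro ⟨-, hlt, -⟩
          exact hi (Finset.mem_range.2 (hlt i))
        simp [polylogTerm, this]
      rw [← Finset.sum_subset hsub hvanish]
      have hterm : ∀ t ∈ Fintype.piFinset (fun _ : Fin r => Finset.range k),
          polylogTerm s z (Fin.cons k t)
            = z 0 ^ k / (k : ℂ) ^ s 0 * polylogTerm (Fin.tail s) (Fin.tail z) t := by
        intro t ht
        rw [Fintype.mem_piFinset] at ht
        by_cases hadm : IsAdmissible t
        · have hadm' : IsAdmissible (Fin.cons k t) := by
            rw [isAdmissible_cons]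
            exact ⟨hk1, fun i => Finset.mem_range.1 (ht i), hadm⟩
          have e1 : (∏ i, z i ^ (Fin.cons k t : Fin (r + 1) → ℕ) i)
              = z 0 ^ k * ∏ i, Fin.tail z i ^ t i := by
            rw [Fin.prod_univ_succ]
            simp [Fin.tail]
          have e2 : (∏ i, ((Fin.cons k t : Fin (r + 1) → ℕ) i : ℂ) ^ s i)
              = (k : ℂ) ^ s 0 * ∏ i, (t i : ℂ) ^ Fin.tail s i := by
            rw [Fin.prod_univ_succ]
            simp [Fin.tail]
          simp only [polylogTerm, if_pos hadm', if_pos hadm, e1, e2]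
          rw [mul_div_mul_comm]
        · have hadm' : ¬ IsAdmissible (Fin.cons k t) := by
            rw [isAdmissible_cons]
            rintro ⟨-, -, h⟩
            exact hadm h
          simp [polylogTerm, hadm', hadm]
      rw [Finset.sum_congr rfl hterm, ← Finset.mul_sum, ih]
    have range_eq : ∑ k ∈ Finset.range m,
        (∑ t ∈ Fintype.piFinset (fun _ : Fin r => Finset.range m),
            polylogTerm s z (Fin.cons k t))
        = ∑ k ∈ Finset.Ico 1 m,
            (∑ t ∈ Fintype.piFinset (fun _ : Fin r => Finset.range m),
                polylogTerm s z (Fin.cons k t)) := by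
      refine (Finset.sum_subset ?_ ?_).symm
      · intro k hk
        rw [Finset.mem_Ico] at hk
        exact Finset.mem_range.2 hk.2
      · intro k hk hk'
        rw [Finset.mem_range] at hk
        rw [Finset.mem_Ico] at hk'
        push_neg at hk'
        have : k = 0 := by omega
        rw [this]
        exact inner_zero
    rw [range_eq, Finset.sum_congr rfl inner_eq]
    rfl

lemma Qaux_succ_diff {r : ℕ} (s : Fin (r + 1) → ℕ) (z : Fin (r + 1) → ℂ) {m : ℕ}
    (hm : 1 ≤ m) :
    Qaux (r + 1) s z (m + 1) - Qaux (r + 1) s z m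
      = z 0 ^ m / (m : ℂ) ^ s 0 * Qaux r (Fin.tail s) (Fin.tail z) m := by
  simp only [Qaux]
  rw [Finset.sum_Ico_succ_top hm]
  ring

/-- No `Qaux` sequence with all `‖z i‖ ≥ 1` can decay geometrically. -/
lemma no_geom_decay :
    ∀ (r : ℕ) (s : Fin r → ℕ) (z : Fin r → ℂ), (∀ i, 1 ≤ ‖z i‖) →
      ∀ q C : ℝ, 0 ≤ q → q < 1 →
        (∀ m : ℕ, 1 ≤ m → ‖Qaux r s z m‖ ≤ C * q ^ m) → False := by
  intro r
  induction r with
  | zero =>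
    intro s z _ q C hq0 hq1 h
    have hlim : Tendsto (fun m : ℕ => C * q ^ m) atTop (nhds 0) := by
      simpa using (tendsto_pow_atTop_nhds_zero_of_lt_one hq0 hq1).const_mul C
    have hev : ∀ᶠ m : ℕ in atTop, C * q ^ m < 1 := hlim.eventually_lt_const one_pos
    obtain ⟨m, hm1, hm2⟩ := ((eventually_ge_atTop 1).and hev).exists
    have : ‖Qaux 0 s z m‖ = 1 := by simp [Qaux]
    have := h m hm1
    rw [‹‖Qaux 0 s z m‖ = 1›] at this
    linarith
  | succ r ih =>
    intro s z hz q C hq0 hq1 h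
    set q' : ℝ := (1 + q) / 2 with hq'def
    have hq'0 : 0 < q' := by positivity
    have hqq' : q < q' := by rw [hq'def]; linarith
    have hq'1 : q' < 1 := by rw [hq'def]; linarith
    -- step 1: geometric-with-polynomial bound for the tail
    have key : ∀ m : ℕ, 1 ≤ m →
        ‖Qaux r (Fin.tail s) (Fin.tail z) m‖ ≤ 2 * C * ((m : ℝ) ^ s 0 * q ^ m) := by
      intro m hm
      have hmpos : (0 : ℝ) < (m : ℝ) ^ s 0 := by positivity
      have hdiff := Qaux_succ_diff s z hm
      have hnorm : ‖z 0‖ ^ m / (m : ℝ) ^ s 0 * ‖Qaux r (Fin.tail s) (Fin.tail z) m‖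
          ≤ 2 * C * q ^ m := by
        have h1 := h (m + 1) (by omega)
        have h2 := h m hm
        have hq' : C * q ^ (m + 1) ≤ C * q ^ m := by
          rcases le_or_gt C 0 with hC | hC
          · nlinarith [norm_nonneg (Qaux (r + 1) s z m), pow_nonneg hq0 m,
              pow_nonneg hq0 (m + 1)]
          · have : q ^ (m + 1) ≤ q ^ m := pow_le_pow_of_le_one hq0 hq1.le (by omega)
            nlinarith
        have hD : ‖Qaux (r + 1) s z (m + 1) - Qaux (r + 1) s z m‖ ≤ 2 * C * q ^ m := by
          calc ‖Qaux (r + 1) s z (m + 1) - Qaux (r + 1) s z m‖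
              ≤ ‖Qaux (r + 1) s z (m + 1)‖ + ‖Qaux (r + 1) s z m‖ := norm_sub_le _ _
            _ ≤ C * q ^ (m + 1) + C * q ^ m := add_le_add h1 h2
            _ ≤ 2 * C * q ^ m := by linarith
        calc ‖z 0‖ ^ m / (m : ℝ) ^ s 0 * ‖Qaux r (Fin.tail s) (Fin.tail z) m‖
            = ‖Qaux (r + 1) s z (m + 1) - Qaux (r + 1) s z m‖ := by
              rw [hdiff, norm_mul, norm_div, norm_pow, norm_pow, Complex.norm_natCast]
          _ ≤ 2 * C * q ^ m := hD
      have hz1 : (1 : ℝ) ≤ ‖z 0‖ ^ m := one_le_pow₀ (hz 0)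
      have hQnn := norm_nonneg (Qaux r (Fin.tail s) (Fin.tail z) m)
      -- from hnorm : (‖z0‖^m / m^s0) * Q ≤ 2Cq^m ⇒ Q ≤ 2Cq^m * m^s0
      have : ‖Qaux r (Fin.tail s) (Fin.tail z) m‖ * ‖z 0‖ ^ m
          ≤ 2 * C * q ^ m * (m : ℝ) ^ s 0 := by
        rw [div_mul_eq_mul_div, mul_comm (‖z 0‖ ^ m)] at hnorm
        exact (div_le_iff₀ hmpos).1 hnorm
      nlinarith
    -- step 2: absorb the polynomial into a slightly larger geometric rate
    have hg : Tendsto (fun m : ℕ => 2 * C * ((m : ℝ) ^ s 0 * (q / q') ^ m)) atTop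
        (nhds 0) := by
      have := (tendsto_pow_const_mul_const_pow_of_lt_one (s 0)
        (div_nonneg hq0 hq'0.le) ((div_lt_one hq'0).2 hqq')).const_mul (2 * C)
      simpa [mul_comm, mul_assoc, mul_left_comm] using this
    obtain ⟨B, hB⟩ := hg.bddAbove_range
    refine ih (Fin.tail s) (Fin.tail z) (fun i => hz i.succ) q' (max B 0) hq'0.le hq'1 ?_
    intro m hm
    have hqm : q ^ m = (q / q') ^ m * q' ^ m := by
      rw [← mul_pow, div_mul_cancel₀ _ (ne_of_gt hq'0)]
    have hBm : 2 * C * ((m : ℝ) ^ s 0 * (q / q') ^ m) ≤ max B 0 :=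
      le_trans (hB (Set.mem_range_self m)) (le_max_left _ _)
    calc ‖Qaux r (Fin.tail s) (Fin.tail z) m‖
        ≤ 2 * C * ((m : ℝ) ^ s 0 * q ^ m) := key m hm
      _ = 2 * C * ((m : ℝ) ^ s 0 * (q / q') ^ m) * q' ^ m := by rw [hqm]; ring
      _ ≤ max B 0 * q' ^ m :=
          mul_le_mul_of_nonneg_right hBm (pow_nonneg hq'0.le m)

set_option maxHeartbeats 1000000 in
/-- Summability of products of geometric sequences over tuples. -/
lemma summable_geom_pi (ρ : ℝ) (h0 : 0 ≤ ρ) (h1 : ρ < 1) :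
    ∀ r : ℕ, Summable (fun n : Fin r → ℕ => ∏ i, ρ ^ n i) := by
  intro r
  induction r with
  | zero =>
    haveI : Finite (Fin 0 → ℕ) := Finite.of_subsingleton
    exact Summable.of_finite
  | succ r ih =>
    have hgeo : Summable (fun k : ℕ => ρ ^ k) := summable_geometric_of_lt_one h0 h1
    have hprod : Summable (fun p : ℕ × (Fin r → ℕ) => ρ ^ p.1 * ∏ i, ρ ^ p.2 i) :=
      Summable.mul_of_nonneg (f := fun k : ℕ => ρ ^ k)
        (g := fun n : Fin r → ℕ => ∏ i, ρ ^ n i) hgeo ih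
        (fun k => pow_nonneg h0 k) (fun t => Finset.prod_nonneg fun i _ => pow_nonneg h0 _)
    have hequiv := (Fin.consEquiv (fun _ : Fin (r + 1) => ℕ)).summable_iff
      (f := fun n : Fin (r + 1) → ℕ => ∏ i, ρ ^ n i)
    rw [← hequiv]
    have : ((fun n : Fin (r + 1) → ℕ => ∏ i, ρ ^ n i) ∘
        (Fin.consEquiv (fun _ : Fin (r + 1) => ℕ)))
        = fun p : ℕ × (Fin r → ℕ) => ρ ^ p.1 * ∏ i, ρ ^ p.2 i := by
      funext p
      simp [Fin.consEquiv, Fin.prod_univ_succ]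
    rw [this]
    exact hprod

set_option maxHeartbeats 2000000 in
/-- Viewed as a function of `z₁`, with `z₂, …, z_r` fixed of modulus 1,
the multiple polylogarithm series has radius of convergence 1: it converges whenever
`‖z₁‖ < 1` and diverges whenever `‖z₁‖ > 1` (for any positive integers `s₁, …, s_r`). -/
theorem polylog_radius_one {r : ℕ} (hr : 0 < r) (s : Fin r → ℕ) (σ : Fin r → ℂ)
    (hs : ∀ i, 0 < s i) (hσ : ∀ i, ‖σ i‖ = 1) :
    (∀ z : ℂ, ‖z‖ < 1 →
      ∃ L : ℂ, Tendsto (polylogPartial s (Function.update σ ⟨0, hr⟩ z)) atTop (nhds L)) ∧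
    (∀ z : ℂ, 1 < ‖z‖ →
      ¬∃ L : ℂ, Tendsto (polylogPartial s (Function.update σ ⟨0, hr⟩ z)) atTop (nhds L)) := by
  constructor
  · -- convergence for ‖z‖ < 1
    intro z hz
    set w : Fin r → ℂ := Function.update σ ⟨0, hr⟩ z with hw
    set ρ : ℝ := ‖z‖ ^ ((r : ℝ)⁻¹) with hρ
    have hrne : (r : ℝ) ≠ 0 := Nat.cast_ne_zero.2 hr.ne'
    have hρ0 : 0 ≤ ρ := Real.rpow_nonneg (norm_nonneg z) _
    have hρ1 : ρ < 1 := by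
      rcases eq_or_lt_of_le (norm_nonneg z) with h | h
      · rw [hρ, ← h, Real.zero_rpow (by positivity)]; norm_num
      · exact Real.rpow_lt_one (norm_nonneg z) hz (by positivity)
    have hρr : ρ ^ r = ‖z‖ := by
      rw [hρ, ← Real.rpow_natCast (‖z‖ ^ ((r : ℝ)⁻¹)) r, ← Real.rpow_mul (norm_nonneg z),
        inv_mul_cancel₀ hrne, Real.rpow_one]
    -- the term is bounded by the geometric product
    have hbound : ∀ n : Fin r → ℕ, ‖polylogTerm s w n‖ ≤ ∏ i, ρ ^ n i := by
      intro n
      by_cases hadm : IsAdmissible n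
      · have h1 : ‖polylogTerm s w n‖
            ≤ ∏ i, ‖w i‖ ^ n i := by
          rw [polylogTerm, if_pos hadm, norm_div]
          have hden : (1 : ℝ) ≤ ‖∏ i, ((n i : ℂ) ^ s i)‖ := by
            rw [norm_prod]
            calc (1 : ℝ) = ∏ _i : Fin r, 1 := by simp
              _ ≤ ∏ i, ‖((n i : ℂ) ^ s i)‖ := by
                  refine Finset.prod_le_prod (fun _ _ => zero_le_one) (fun i _ => ?_)
                  rw [norm_pow, Complex.norm_natCast]
                  exact one_le_pow₀ (Nat.one_le_cast.2 (hadm.2 i))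
          calc ‖∏ i, w i ^ n i‖ / ‖∏ i, ((n i : ℂ) ^ s i)‖
              ≤ ‖∏ i, w i ^ n i‖ / 1 :=
                div_le_div_of_nonneg_left (norm_nonneg _) one_pos hden |>.trans
                  (le_of_eq rfl) |>.trans (le_of_eq rfl)
            _ = ‖∏ i, w i ^ n i‖ := div_one _
            _ = ∏ i, ‖w i‖ ^ n i := by rw [norm_prod]; simp [norm_pow]
        have h2 : ∏ i, ‖w i‖ ^ n i = ‖z‖ ^ n ⟨0, hr⟩ := by
          refine Finset.prod_eq_single (⟨0, hr⟩ : Fin r) ?_ ?_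
          · intro j _ hj
            have : w j = σ j := Function.update_of_ne hj _ _
            rw [this, hσ j, one_pow]
          · intro h; exact absurd (Finset.mem_univ _) h
        have h3 : ‖z‖ ^ n ⟨0, hr⟩ ≤ ∏ i, ρ ^ n i := by
          rw [Finset.prod_pow_eq_pow_sum]
          have hsum : ∑ i, n i ≤ r * n ⟨0, hr⟩ := by
            calc ∑ i, n i ≤ ∑ _i : Fin r, n ⟨0, hr⟩ := by
                  refine Finset.sum_le_sum fun i _ => ?_
                  rcases eq_or_ne i ⟨0, hr⟩ with h | h
                  · rw [h]
                  · have : (⟨0, hr⟩ : Fin r) < i := by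
                      rcases Fin.lt_or_lt_of_ne h with h' | h'
                      · exact absurd h' (by simp [Fin.lt_def])
                      · exact h'
                    exact (hadm.1 _ _ this).le
              _ = r * n ⟨0, hr⟩ := by simp [Finset.sum_const, mul_comm]
          calc ‖z‖ ^ n ⟨0, hr⟩ = (ρ ^ r) ^ n ⟨0, hr⟩ := by rw [hρr]
            _ = ρ ^ (r * n ⟨0, hr⟩) := by rw [← pow_mul]
            _ ≤ ρ ^ (∑ i, n i) := pow_le_pow_of_le_one hρ0 hρ1.le hsum
        calc ‖polylogTerm s w n‖ ≤ ∏ i, ‖w i‖ ^ n i := h1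
          _ = ‖z‖ ^ n ⟨0, hr⟩ := h2
          _ ≤ ∏ i, ρ ^ n i := h3
      · rw [polylogTerm, if_neg hadm]
        simp only [norm_zero]
        exact Finset.prod_nonneg fun i _ => pow_nonneg hρ0 _
    have hsummable : Summable (polylogTerm s w) :=
      Summable.of_norm_bounded (summable_geom_pi ρ hρ0 hρ1 r) hbound
    refine ⟨∑' n, polylogTerm s w n, ?_⟩
    have hmono : Monotone (fun N : ℕ =>
        Fintype.piFinset fun _ : Fin r => Finset.range (N + 1)) := by
      intro a b hab
      exact Fintype.piFinset_subset _ _ fun _ => Finset.range_subset_range.2 (by omega)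
    have hcover : ∀ n : Fin r → ℕ, ∃ N : ℕ,
        n ∈ Fintype.piFinset fun _ : Fin r => Finset.range (N + 1) := by
      intro n
      refine ⟨Finset.univ.sup n, Fintype.mem_piFinset.2 fun i => Finset.mem_range.2 ?_⟩
      have := Finset.le_sup (f := n) (Finset.mem_univ i)
      omega
    have htend : Tendsto (fun N : ℕ =>
        Fintype.piFinset fun _ : Fin r => Finset.range (N + 1)) atTop atTop :=
      tendsto_atTop_finset_of_monotone hmono hcover
    exact (hsummable.hasSum.comp htend)
  · -- divergence for ‖z‖ > 1
    intro z hz ⟨L, hL⟩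
    obtain ⟨r', rfl⟩ : ∃ r', r = r' + 1 := ⟨r - 1, by omega⟩
    set w : Fin (r' + 1) → ℂ := Function.update σ ⟨0, hr⟩ z with hw
    have hw0 : w 0 = z := by
      have : (0 : Fin (r' + 1)) = ⟨0, hr⟩ := rfl
      rw [this, hw]
      exact Function.update_self _ _ _
    have hwt : ∀ i : Fin r', Fin.tail w i = σ i.succ := by
      intro i
      show w i.succ = σ i.succ
      exact Function.update_of_ne (by simp [Fin.ext_iff]) _ _
    -- rewrite partial sums via Qaux
    have hQ : ∀ N, polylogPartial s w N = Qaux (r' + 1) s w (N + 1) := fun N =>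
      sum_piFinset_polylogTerm (r' + 1) s w (N + 1)
    have hL' : Tendsto (fun N => Qaux (r' + 1) s w (N + 1)) atTop (nhds L) := by
      refine hL.congr fun N => hQ N
    have hL'' : Tendsto (fun N => Qaux (r' + 1) s w (N + 2)) atTop (nhds L) :=
      hL'.comp (tendsto_add_atTop_nat 1)
    have hD1 : Tendsto (fun N => Qaux (r' + 1) s w (N + 1 + 1) - Qaux (r' + 1) s w (N + 1))
        atTop (nhds 0) := by
      have := hL''.sub hL'
      simpa using this
    have hD : Tendsto (fun m => Qaux (r' + 1) s w (m + 1) - Qaux (r' + 1) s w m)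
        atTop (nhds 0) := (tendsto_add_atTop_iff_nat 1).1 hD1
    -- the norms of the differences
    have hDnorm : Tendsto (fun m => ‖Qaux (r' + 1) s w (m + 1) - Qaux (r' + 1) s w m‖)
        atTop (nhds 0) := by
      simpa using hD.norm
    obtain ⟨B₂, hB₂⟩ := hDnorm.bddAbove_range
    have hB₂nn : ∀ m, ‖Qaux (r' + 1) s w (m + 1) - Qaux (r' + 1) s w m‖ ≤ B₂ :=
      fun m => hB₂ (Set.mem_range_self m)
    have hB₂0 : 0 ≤ B₂ := le_trans (norm_nonneg _) (hB₂nn 0)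
    -- geometric rate
    have hz0 : (0 : ℝ) < ‖z‖ := by linarith
    set q : ℝ := (1 + ‖z‖⁻¹) / 2 with hqdef
    have hzinv1 : ‖z‖⁻¹ < 1 := by
      rw [inv_lt_one_iff₀]; right; exact hz
    have hzinv0 : 0 < ‖z‖⁻¹ := by positivity
    have hq0 : 0 < q := by rw [hqdef]; linarith
    have hq1 : q < 1 := by rw [hqdef]; linarith
    have hqz : 1 < q * ‖z‖ := by
      rw [hqdef]
      rw [div_mul_eq_mul_div, lt_div_iff₀ (by norm_num : (0:ℝ) < 2)]
      have : (1 + ‖z‖⁻¹) * ‖z‖ = ‖z‖ + 1 := by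
        rw [add_mul, one_mul, inv_mul_cancel₀ hz0.ne', add_comm]
      rw [this]; linarith
    -- m^{s0} / (q‖z‖)^m is bounded
    have hwlim : Tendsto (fun m : ℕ => (m : ℝ) ^ s 0 * ((q * ‖z‖)⁻¹) ^ m) atTop (nhds 0) :=
      tendsto_pow_const_mul_const_pow_of_lt_one (s 0)
        (by positivity) (by rw [inv_lt_one_iff₀]; right; exact hqz)
    obtain ⟨B₁, hB₁⟩ := hwlim.bddAbove_range
    have hB₁m : ∀ m : ℕ, (m : ℝ) ^ s 0 * ((q * ‖z‖)⁻¹) ^ m ≤ B₁ :=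
      fun m => hB₁ (Set.mem_range_self m)
    -- the tail bound
    have hbound : ∀ m : ℕ, 1 ≤ m →
        ‖Qaux r' (Fin.tail s) (Fin.tail w) m‖ ≤ (B₂ * B₁) * q ^ m := by
      intro m hm
      have hmpos : (0 : ℝ) < (m : ℝ) ^ s 0 := by positivity
      have hdiff := Qaux_succ_diff s w hm
      have heq : ‖Qaux (r' + 1) s w (m + 1) - Qaux (r' + 1) s w m‖
          = ‖z‖ ^ m / (m : ℝ) ^ s 0 * ‖Qaux r' (Fin.tail s) (Fin.tail w) m‖ := by
        rw [hdiff, norm_mul, norm_div, norm_pow, norm_pow, Complex.norm_natCast, hw0]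
      have h1 : ‖z‖ ^ m / (m : ℝ) ^ s 0 * ‖Qaux r' (Fin.tail s) (Fin.tail w) m‖ ≤ B₂ := by
        rw [← heq]; exact hB₂nn m
      have hzm : (0 : ℝ) < ‖z‖ ^ m := by positivity
      have h2 : ‖Qaux r' (Fin.tail s) (Fin.tail w) m‖
          ≤ B₂ * ((m : ℝ) ^ s 0 / ‖z‖ ^ m) := by
        have h11 : ‖z‖ ^ m / (m : ℝ) ^ s 0 * ((m : ℝ) ^ s 0 / ‖z‖ ^ m) = 1 := by
          rw [div_mul_div_comm, mul_comm (‖z‖ ^ m)]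
          exact div_self (by positivity)
        have key : ‖Qaux r' (Fin.tail s) (Fin.tail w) m‖
            = (‖z‖ ^ m / (m : ℝ) ^ s 0 * ‖Qaux r' (Fin.tail s) (Fin.tail w) m‖)
              * ((m : ℝ) ^ s 0 / ‖z‖ ^ m) := by
          calc ‖Qaux r' (Fin.tail s) (Fin.tail w) m‖
              = ‖Qaux r' (Fin.tail s) (Fin.tail w) m‖
                * (‖z‖ ^ m / (m : ℝ) ^ s 0 * ((m : ℝ) ^ s 0 / ‖z‖ ^ m)) := by
                rw [h11, mul_one]
            _ = (‖z‖ ^ m / (m : ℝ) ^ s 0 * ‖Qaux r' (Fin.tail s) (Fin.tail w) m‖)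
                * ((m : ℝ) ^ s 0 / ‖z‖ ^ m) := by ring
        rw [key]
        exact mul_le_mul_of_nonneg_right h1 (by positivity)
      have h3 : (m : ℝ) ^ s 0 / ‖z‖ ^ m ≤ B₁ * q ^ m := by
        have : (m : ℝ) ^ s 0 / ‖z‖ ^ m
            = ((m : ℝ) ^ s 0 * ((q * ‖z‖)⁻¹) ^ m) * q ^ m := by
          have key2 : (q * ‖z‖)⁻¹ * q = ‖z‖⁻¹ := by
            rw [mul_inv, mul_comm q⁻¹, mul_assoc, inv_mul_cancel₀ hq0.ne', mul_one]
          rw [mul_assoc, ← mul_pow, key2, inv_pow, ← div_eq_mul_inv]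
        rw [this]
        exact mul_le_mul_of_nonneg_right (hB₁m m) (pow_nonneg hq0.le m)
      calc ‖Qaux r' (Fin.tail s) (Fin.tail w) m‖
          ≤ B₂ * ((m : ℝ) ^ s 0 / ‖z‖ ^ m) := h2
        _ ≤ B₂ * (B₁ * q ^ m) := mul_le_mul_of_nonneg_left h3 hB₂0
        _ = (B₂ * B₁) * q ^ m := by ring
    exact no_geom_decay r' (Fin.tail s) (Fin.tail w)
      (fun i => by rw [hwt i, hσ]) q (B₂ * B₁) hq0.le hq1 hbound
end

section
/- Let k be a ℚ-algebra and let MT(Γ)(k) be the set of series in k⟨⟨X_Γ⟩⟩ with constant term 1, equipped with G ⊛ H = G · κ_G(H), where κ_G is the continuous algebra endomorphism fixing x₀ and sending x_σ to t_σ(G)^{-1} x_σ t_σ(G). Then (MT(Γ)(k), ⊛) is a group with identity 1, and G ↦ κ_G is a group homomorphism into the automorphisms of k⟨⟨X_Γ⟩⟩ (i.e. κ_{G ⊛ H} = κ_G ∘ κ_H). -/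
/- Noncommutative formal power series over the alphabet X_Γ = {x₀} ∪ {x_σ : σ ∈ Γ},
modelled as coefficient functions `List (Option Γ) → k` (none = x₀, some σ = x_σ). -/

open Finset

/-- Noncommutative series: a coefficient for each word. -/
abbrev Ser (X k : Type) : Type := List X → k

/-- The finset of all words of length at most `L` over a finite alphabet. -/
def wordsLe (X : Type) [Fintype X] [DecidableEq X] (L : ℕ) : Finset (List X) :=
  (Finset.range (L + 1)).biUnion fun n =>
    (Fintype.piFinset fun _ : Fin n => (Finset.univ : Finset X)).image List.ofFn

/-- The unit series 1. -/
def sone {X k : Type} [CommRing k] : Ser X k := fun w =>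
  match w with
  | [] => 1
  | _ => 0

/-- Product of noncommutative series (Cauchy product over factorizations of a word). -/
def smul2 {X k : Type} [CommRing k] (F G : Ser X k) : Ser X k := fun w =>
  ∑ p ∈ Finset.range (w.length + 1), F (w.take p) * G (w.drop p)

/-- The series given by a single word with coefficient 1. -/
def monom {X k : Type} [CommRing k] [DecidableEq X] (v : List X) : Ser X k :=
  fun w => if w = v then 1 else 0

/-- Inverse of a series with constant term 1. -/
def sinv {X k : Type} [CommRing k] (G : Ser X k) : List X → k
  | [] => 1
  | a :: w => - ∑ p ∈ Finset.range (w.length + 1),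
      G (a :: w.take p) * sinv G (w.drop p)
  termination_by w => w.length
  decreasing_by simp only [List.length_drop, List.length_cons]; omega

/-- The automorphism t_σ of `k⟨⟨X_Γ⟩⟩` fixing x₀ and sending x_τ to x_{στ},
acting on series. -/
def tser {Γ k : Type} [CommGroup Γ] [CommRing k] (σ : Γ) (F : Ser (Option Γ) k) :
    Ser (Option Γ) k :=
  fun w => F (w.map (Option.map (fun τ => σ⁻¹ * τ)))

/-- The image of the letters under the endomorphism κ_G :
`κ_G(x₀) = x₀` and `κ_G(x_σ) = t_σ(G)⁻¹ x_σ t_σ(G)`. -/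
def kletter {Γ k : Type} [CommGroup Γ] [Fintype Γ] [DecidableEq Γ] [CommRing k]
    (G : Ser (Option Γ) k) : Option Γ → Ser (Option Γ) k
  | none => monom [none]
  | some σ => smul2 (sinv (tser σ G)) (smul2 (monom [some σ]) (tser σ G))

/-- Product of a list of series. -/
def wordProd {X k : Type} [CommRing k] : List (Ser X k) → Ser X k
  | [] => sone
  | F :: L => smul2 F (wordProd L)

/-- The continuous algebra endomorphism κ_G applied to a series. -/
def kappa {Γ k : Type} [CommGroup Γ] [Fintype Γ] [DecidableEq Γ] [CommRing k]
    (G F : Ser (Option Γ) k) : Ser (Option Γ) k :=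
  fun u => ∑ w ∈ wordsLe (Option Γ) u.length, F w * wordProd (w.map (kletter G)) u

/-- The twisted (Ihara) product `G ⊛ H = G · κ_G(H)`. -/
def mulMT {Γ k : Type} [CommGroup Γ] [Fintype Γ] [DecidableEq Γ] [CommRing k]
    (G H : Ser (Option Γ) k) : Ser (Option Γ) k :=
  smul2 G (kappa G H)

section Base
variable {X k : Type} [CommRing k]

lemma smul2_nil (F G : Ser X k) : smul2 F G [] = F [] * G [] := by
  simp [smul2]

lemma smul2_cons (F G : Ser X k) (a : X) (w : List X) :
    smul2 F G (a :: w) = smul2 (fun v => F (a :: v)) G w + F [] * G (a :: w) := by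
  unfold smul2
  rw [show (a::w).length + 1 = (w.length + 1) + 1 from rfl, Finset.sum_range_succ']
  simp [List.take_succ_cons, List.drop_succ_cons]

lemma smul2_add_left (F F' G : Ser X k) (w : List X) :
    smul2 (fun v => F v + F' v) G w = smul2 F G w + smul2 F' G w := by
  simp [smul2, add_mul, Finset.sum_add_distrib]

lemma smul2_mulc_left (c : k) (F G : Ser X k) (w : List X) :
    smul2 (fun v => c * F v) G w = c * smul2 F G w := by
  simp [smul2, Finset.mul_sum, mul_assoc]

lemma smul2_zero_left (G : Ser X k) (w : List X) :
    smul2 (fun _ => (0:k)) G w = 0 := by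
  simp [smul2]

lemma sone_smul2 (F : Ser X k) : smul2 sone F = F := by
  funext w
  cases w with
  | nil => simp [smul2, sone]
  | cons a v =>
      rw [smul2_cons]
      have : (fun v' => (sone : Ser X k) (a :: v')) = fun _ => (0:k) := by
        funext v'; simp [sone]
      rw [this, smul2_zero_left]
      simp [sone]

lemma smul2_sone (F : Ser X k) : smul2 F sone = F := by
  funext w
  induction w generalizing F with
  | nil => simp [smul2, sone]
  | cons a v ih =>
      rw [smul2_cons, ih]
      simp [sone]

lemma smul2_assoc (F G H : Ser X k) : smul2 (smul2 F G) H = smul2 F (smul2 G H) := by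
  funext w
  induction w generalizing F with
  | nil => simp [smul2_nil, mul_assoc]
  | cons a v ih =>
      rw [smul2_cons, smul2_cons]
      have h1 : (fun v' => smul2 F G (a :: v'))
          = fun v' => (smul2 (fun u => F (a :: u)) G v' + F [] * G (a :: v')) := by
        funext v'; rw [smul2_cons]
      rw [h1, smul2_add_left, ih, smul2_mulc_left, smul2_nil, smul2_cons]
      ring_nf
lemma sinv_nil (G : Ser X k) : sinv G [] = 1 := by simp [sinv]

lemma smul2_sinv (G : Ser X k) (hG : G [] = 1) : smul2 G (sinv G) = sone := by
  funext w
  cases w with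
  | nil => simp [smul2, sone, sinv, hG]
  | cons a v =>
      show smul2 G (sinv G) (a :: v) = sone (a::v)
      unfold smul2
      rw [show (a::v).length + 1 = (v.length + 1) + 1 from rfl, Finset.sum_range_succ']
      simp only [List.take_succ_cons, List.drop_succ_cons, List.take_zero, List.drop_zero, hG,
        one_mul]
      have : sinv G (a :: v) = - ∑ p ∈ Finset.range (v.length + 1),
          G (a :: v.take p) * sinv G (v.drop p) := by
        rw [sinv]
      rw [this]
      simp [sone]

lemma sinv_smul2 (G : Ser X k) (hG : G [] = 1) : smul2 (sinv G) G = sone := by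
  have h1 : smul2 G (sinv G) = sone := smul2_sinv G hG
  have h2 : smul2 (sinv G) (sinv (sinv G)) = sone := smul2_sinv _ (sinv_nil G)
  calc smul2 (sinv G) G = smul2 (smul2 (sinv G) G) sone := (smul2_sone _).symm
    _ = smul2 (smul2 (sinv G) G) (smul2 (sinv G) (sinv (sinv G))) := by rw [h2]
    _ = smul2 (sinv G) (smul2 G (smul2 (sinv G) (sinv (sinv G)))) := by
        rw [smul2_assoc]
    _ = smul2 (sinv G) (smul2 (smul2 G (sinv G)) (sinv (sinv G))) := by
        rw [smul2_assoc]
    _ = sone := by rw [h1, sone_smul2, h2]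

lemma eq_sinv_of_smul2 (A B : Ser X k) (hA : A [] = 1) (h : smul2 A B = sone) :
    B = sinv A := by
  calc B = smul2 sone B := (sone_smul2 B).symm
    _ = smul2 (smul2 (sinv A) A) B := by rw [sinv_smul2 A hA]
    _ = smul2 (sinv A) (smul2 A B) := smul2_assoc _ _ _
    _ = sinv A := by rw [h, smul2_sone]

lemma sinv_smul2_eq (A B : Ser X k) (hA : A [] = 1) (hB : B [] = 1) :
    sinv (smul2 A B) = smul2 (sinv B) (sinv A) := by
  have hAB : smul2 A B [] = 1 := by rw [smul2_nil, hA, hB, one_mul]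
  refine (eq_sinv_of_smul2 _ _ hAB ?_).symm
  calc smul2 (smul2 A B) (smul2 (sinv B) (sinv A))
      = smul2 A (smul2 (smul2 B (sinv B)) (sinv A)) := by rw [smul2_assoc, smul2_assoc]
    _ = sone := by rw [smul2_sinv B hB, sone_smul2, smul2_sinv A hA]
lemma wordProd_append (L1 L2 : List (Ser X k)) :
    wordProd (L1 ++ L2) = smul2 (wordProd L1) (wordProd L2) := by
  induction L1 with
  | nil => simp [wordProd, sone_smul2]
  | cons F L ih => simp [wordProd, ih, smul2_assoc]

lemma wordProd_zero (L : List (Ser X k)) (h0 : ∀ F ∈ L, F [] = 0) (u : List X)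
    (hlt : u.length < L.length) : wordProd L u = 0 := by
  induction L generalizing u with
  | nil => simp at hlt
  | cons F L ih =>
      show smul2 F (wordProd L) u = 0
      unfold smul2
      refine Finset.sum_eq_zero fun p hp => ?_
      have hp' := Finset.mem_range.mp hp
      rcases Nat.eq_zero_or_pos p with h | h
      · subst h
        simp [h0 F (by simp)]
      · rw [ih (fun F hF => h0 F (by simp [hF])) _ ?_, mul_zero]
        simp only [List.length_drop]
        simp only [List.length_cons] at hlt
        omega

variable [DecidableEq X]

lemma monom_nil : (monom [] : Ser X k) = sone := by
  funext w; cases w <;> simp [monom, sone]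

lemma smul2_monom_single (a : X) (F : Ser X k) (u : List X) :
    smul2 (monom [a]) F u = match u with
      | [] => 0
      | b :: u' => if b = a then F u' else 0 := by
  cases u with
  | nil => simp [smul2, monom]
  | cons b u' =>
      rw [smul2_cons]
      by_cases hb : b = a
      · subst hb
        have h1 : (fun v => (monom [b] : Ser X k) (b :: v)) = (sone : Ser X k) := by
          funext v; cases v <;> simp [monom, sone]
        rw [h1, sone_smul2]
        simp [monom]
      · have h1 : (fun v => (monom [a] : Ser X k) (b :: v)) = fun _ => (0:k) := by
          funext v; simp [monom, hb]
        rw [h1, smul2_zero_left]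
        simp [monom, hb]

lemma wordProd_monom (w : List X) :
    wordProd (w.map (fun x => (monom [x] : Ser X k))) = monom w := by
  induction w with
  | nil => simpa [wordProd] using monom_nil.symm
  | cons a w ih =>
      funext u
      show smul2 (monom [a]) (wordProd _) u = monom (a::w) u
      rw [smul2_monom_single]
      cases u with
      | nil => simp [monom]
      | cons b u' =>
          rw [ih]
          by_cases hb : b = a <;> simp [monom, hb]

lemma mem_wordsLe [Fintype X] (w : List X) (L : ℕ) :
    w ∈ wordsLe X L ↔ w.length ≤ L := by
  constructor
  · intro h
    simp only [wordsLe, Finset.mem_biUnion, Finset.mem_range, Finset.mem_image] at h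
    obtain ⟨n, hn, f, _, rfl⟩ := h
    simp only [List.length_ofFn]
    omega
  · intro h
    simp only [wordsLe, Finset.mem_biUnion, Finset.mem_range, Finset.mem_image]
    exact ⟨w.length, by omega, w.get, by simp [Fintype.mem_piFinset], List.ofFn_get w⟩
variable [Fintype X]

/-- Generic substitution endomorphism determined by letter images. -/
def subst (φ : X → Ser X k) (F : Ser X k) : Ser X k :=
  fun u => ∑ w ∈ wordsLe X u.length, F w * wordProd (w.map φ) u

lemma wordProd_map_zero {φ : X → Ser X k} (h0 : ∀ x, φ x [] = 0) (w u : List X)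
    (hlt : u.length < w.length) : wordProd (w.map φ) u = 0 := by
  refine wordProd_zero _ ?_ _ (by simpa using hlt)
  intro F hF
  obtain ⟨x, _, rfl⟩ := List.mem_map.mp hF
  exact h0 x

lemma subst_stable {φ : X → Ser X k} (h0 : ∀ x, φ x [] = 0) (F : Ser X k)
    (u : List X) (L : ℕ) (hL : u.length ≤ L) :
    subst φ F u = ∑ w ∈ wordsLe X L, F w * wordProd (w.map φ) u := by
  refine Finset.sum_subset ?_ ?_
  · intro w hw
    rw [mem_wordsLe] at hw ⊢
    omega
  · intro w hw hnw
    rw [mem_wordsLe] at hw hnw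
    rw [wordProd_map_zero h0 w u (by omega), mul_zero]

lemma subst_nil (φ : X → Ser X k) (F : Ser X k) : subst φ F [] = F [] := by
  unfold subst
  rw [Finset.sum_eq_single ([] : List X)]
  · simp [wordProd, sone]
  · intro w hw hne
    rw [mem_wordsLe] at hw
    exact absurd (List.length_eq_zero_iff.mp (Nat.le_zero.mp hw)) hne
  · intro h
    exact absurd ((mem_wordsLe _ _).mpr (by simp)) h

lemma subst_sone (φ : X → Ser X k) : subst φ sone = sone := by
  funext u
  unfold subst
  rw [Finset.sum_eq_single ([] : List X)]
  · cases u <;> simp [wordProd, sone]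
  · intro w hw hne
    cases w with
    | nil => exact absurd rfl hne
    | cons a v => simp [sone]
  · intro h
    exact absurd ((mem_wordsLe _ _).mpr (by simp)) h

lemma subst_monom {φ : X → Ser X k} (h0 : ∀ x, φ x [] = 0) (v : List X) :
    subst φ (monom v) = wordProd (v.map φ) := by
  funext u
  unfold subst
  have : ∀ w ∈ wordsLe X u.length,
      (monom v : Ser X k) w * wordProd (w.map φ) u
      = if w = v then wordProd (w.map φ) u else 0 := by
    intro w _
    by_cases h : w = v <;> simp [monom, h]
  rw [Finset.sum_congr rfl this, Finset.sum_ite_eq' (wordsLe X u.length) v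
    (fun w => wordProd (w.map φ) u)]
  by_cases hv : v ∈ wordsLe X u.length
  · simp [hv]
  · rw [if_neg hv]
    rw [mem_wordsLe] at hv
    exact (wordProd_map_zero h0 v u (by omega)).symm
lemma subst_mul {φ : X → Ser X k} (h0 : ∀ x, φ x [] = 0) (F F' : Ser X k) :
    subst φ (smul2 F F') = smul2 (subst φ F) (subst φ F') := by
  funext u
  have hR : smul2 (subst φ F) (subst φ F') u
      = ∑ w1 ∈ wordsLe X u.length, ∑ w2 ∈ wordsLe X u.length,
          F w1 * F' w2 * wordProd ((w1 ++ w2).map φ) u := by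
    unfold smul2
    have step : ∀ p ∈ Finset.range (u.length + 1),
        subst φ F (u.take p) * subst φ F' (u.drop p)
        = ∑ w1 ∈ wordsLe X u.length, ∑ w2 ∈ wordsLe X u.length,
            (F w1 * wordProd (w1.map φ) (u.take p))
              * (F' w2 * wordProd (w2.map φ) (u.drop p)) := by
      intro p hp
      rw [subst_stable h0 F _ u.length (by rw [List.length_take]; omega),
        subst_stable h0 F' _ u.length (by rw [List.length_drop]; omega),
        Finset.sum_mul_sum]
    rw [Finset.sum_congr rfl step, Finset.sum_comm]
    refine Finset.sum_congr rfl fun w1 _ => ?_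
    rw [Finset.sum_comm]
    refine Finset.sum_congr rfl fun w2 _ => ?_
    have : ∑ p ∈ Finset.range (u.length + 1),
        F w1 * wordProd (w1.map φ) (u.take p) * (F' w2 * wordProd (w2.map φ) (u.drop p))
        = F w1 * F' w2 * ∑ p ∈ Finset.range (u.length + 1),
            wordProd (w1.map φ) (u.take p) * wordProd (w2.map φ) (u.drop p) := by
      rw [Finset.mul_sum]
      exact Finset.sum_congr rfl fun p _ => by ring
    rw [this]
    congr 1
    have : (w1 ++ w2).map φ = w1.map φ ++ w2.map φ := List.map_append
    rw [this, wordProd_append]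
    rfl
  rw [hR]
  -- split off the terms with total length > n, which vanish
  rw [← Finset.sum_product']
  classical
  rw [← Finset.sum_filter_add_sum_filter_not ((wordsLe X u.length) ×ˢ (wordsLe X u.length))
    (fun q => q.1.length + q.2.length ≤ u.length)]
  have hzero : ∑ q ∈ Finset.filter (fun q => ¬(q.1.length + q.2.length ≤ u.length))
      ((wordsLe X u.length) ×ˢ (wordsLe X u.length)),
      F q.1 * F' q.2 * wordProd ((q.1 ++ q.2).map φ) u = 0 := by
    refine Finset.sum_eq_zero fun q hq => ?_
    have h := (Finset.mem_filter.mp hq).2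
    rw [wordProd_map_zero h0 _ _ (by rw [List.length_append]; omega), mul_zero]
  rw [hzero, add_zero]
  -- now a bijection with the sigma over (w, cut point)
  unfold subst
  have hL1 : ∑ w ∈ wordsLe X u.length, smul2 F F' w * wordProd (w.map φ) u
      = ∑ w ∈ wordsLe X u.length, ∑ q ∈ Finset.range (w.length + 1),
          F (w.take q) * F' (w.drop q) * wordProd (w.map φ) u := by
    refine Finset.sum_congr rfl fun w _ => ?_
    unfold smul2
    rw [Finset.sum_mul]
  rw [hL1, Finset.sum_sigma' (wordsLe X u.length) (fun w => Finset.range (w.length + 1))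
    (fun w q => F (w.take q) * F' (w.drop q) * wordProd (w.map φ) u)]
  refine Finset.sum_bij' (i := fun x _ => (x.1.take x.2, x.1.drop x.2))
    (j := fun q _ => ⟨q.1 ++ q.2, q.1.length⟩) ?_ ?_ ?_ ?_ ?_
  · rintro ⟨w, q⟩ hx
    simp only [Finset.mem_sigma, Finset.mem_range, mem_wordsLe] at hx
    simp only [Finset.mem_filter, Finset.mem_product, mem_wordsLe,
      List.length_take, List.length_drop]
    omega
  · rintro ⟨w1, w2⟩ hq
    simp only [Finset.mem_filter, Finset.mem_product, mem_wordsLe] at hq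
    simp only [Finset.mem_sigma, Finset.mem_range, mem_wordsLe, List.length_append]
    omega
  · rintro ⟨w, q⟩ hx
    simp only [Finset.mem_sigma, Finset.mem_range, mem_wordsLe] at hx
    have h1 : (w.take q).length = q := by rw [List.length_take]; omega
    refine Sigma.ext ?_ ?_
    · simp [List.take_append_drop]
    · simp [h1]
  · rintro ⟨w1, w2⟩ hq
    simp only [Prod.mk.injEq]
    constructor
    · exact List.take_left
    · exact List.drop_left
  · rintro ⟨w, q⟩ hx
    simp only
    rw [List.take_append_drop]
lemma subst_sinv {φ : X → Ser X k} (h0 : ∀ x, φ x [] = 0) (F : Ser X k) (hF : F [] = 1) :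
    subst φ (sinv F) = sinv (subst φ F) := by
  refine eq_sinv_of_smul2 (subst φ F) _ (by rw [subst_nil]; exact hF) ?_
  rw [← subst_mul h0, smul2_sinv F hF, subst_sone]

lemma subst_wordProd {φ ψ : X → Ser X k} (h0 : ∀ x, φ x [] = 0) (v : List X) :
    subst φ (wordProd (v.map ψ)) = wordProd (v.map (fun x => subst φ (ψ x))) := by
  induction v with
  | nil => simpa [wordProd] using subst_sone φ
  | cons x v ih =>
      show subst φ (smul2 (ψ x) (wordProd (v.map ψ))) = smul2 (subst φ (ψ x)) _
      rw [subst_mul h0, ih]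

lemma subst_subst {φ ψ : X → Ser X k} (h0φ : ∀ x, φ x [] = 0)
    (h0ψ : ∀ x, ψ x [] = 0) (F : Ser X k) :
    subst φ (subst ψ F) = subst (fun x => subst φ (ψ x)) F := by
  funext u
  show ∑ w ∈ wordsLe X u.length, subst ψ F w * wordProd (w.map φ) u
    = ∑ v ∈ wordsLe X u.length, F v * wordProd (v.map fun x => subst φ (ψ x)) u
  have expand : ∀ w ∈ wordsLe X u.length,
      subst ψ F w * wordProd (w.map φ) u
      = ∑ v ∈ wordsLe X u.length,
          F v * wordProd (v.map ψ) w * wordProd (w.map φ) u := by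
    intro w hw
    rw [mem_wordsLe] at hw
    have : subst ψ F w = ∑ v ∈ wordsLe X u.length, F v * wordProd (v.map ψ) w := by
      unfold subst
      refine Finset.sum_subset ?_ ?_
      · intro v hv; rw [mem_wordsLe] at hv ⊢; omega
      · intro v hv hnv
        rw [mem_wordsLe] at hv hnv
        rw [wordProd_map_zero h0ψ _ _ (by omega), mul_zero]
    rw [this, Finset.sum_mul]
  rw [Finset.sum_congr rfl expand, Finset.sum_comm]
  refine Finset.sum_congr rfl fun v _ => ?_
  have : ∑ w ∈ wordsLe X u.length, F v * wordProd (v.map ψ) w * wordProd (w.map φ) u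
      = F v * ∑ w ∈ wordsLe X u.length, wordProd (v.map ψ) w * wordProd (w.map φ) u := by
    rw [Finset.mul_sum]
    exact Finset.sum_congr rfl fun w _ => by ring
  rw [this]
  congr 1
  have : ∑ w ∈ wordsLe X u.length, wordProd (v.map ψ) w * wordProd (w.map φ) u
      = subst φ (wordProd (v.map ψ)) u := rfl
  rw [this, subst_wordProd h0φ]

lemma sinv_sone : sinv (sone : Ser X k) = sone :=
  (eq_sinv_of_smul2 sone sone rfl (sone_smul2 sone)).symm

lemma subst_monomid (F : Ser X k) : subst (fun x => monom [x]) F = F := by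
  funext u
  unfold subst
  have : ∀ w ∈ wordsLe X u.length,
      F w * wordProd (w.map fun x => (monom [x] : Ser X k)) u
      = F w * monom w u := by
    intro w _; rw [wordProd_monom]
  rw [Finset.sum_congr rfl this, Finset.sum_eq_single u]
  · simp [monom]
  · intro w _ hne
    simp [monom, Ne.symm hne]
  · intro h
    exact absurd ((mem_wordsLe _ _).mpr le_rfl) h
end Base

section Gamma
variable {Γ k : Type} [CommGroup Γ] [Fintype Γ] [DecidableEq Γ] [CommRing k]

lemma optmap_cancel (σ : Γ) (u : List (Option Γ)) :
    (u.map (Option.map (fun τ => σ⁻¹ * τ))).map (Option.map (fun τ => σ * τ)) = u := by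
  rw [List.map_map]
  have : (Option.map (fun τ => σ * τ) ∘ Option.map (fun τ => σ⁻¹ * τ)) = id := by
    funext x
    simp [Option.map_map, Function.comp_def, mul_inv_cancel_left]
  rw [this, List.map_id]

lemma optmap_cancel' (σ : Γ) (u : List (Option Γ)) :
    (u.map (Option.map (fun τ => σ * τ))).map (Option.map (fun τ => σ⁻¹ * τ)) = u := by
  have := optmap_cancel σ⁻¹ u
  simpa using this

lemma tser_smul2 (σ : Γ) (F G : Ser (Option Γ) k) :
    tser σ (smul2 F G) = smul2 (tser σ F) (tser σ G) := by
  funext u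
  unfold tser smul2
  rw [List.length_map]
  exact Finset.sum_congr rfl fun p _ => by simp only [← List.map_take, ← List.map_drop]

lemma tser_sone (σ : Γ) : tser σ (sone : Ser (Option Γ) k) = sone := by
  funext u; cases u <;> simp [tser, sone]

lemma tser_nil (σ : Γ) (F : Ser (Option Γ) k) : tser σ F [] = F [] := rfl

lemma tser_tser (σ τ : Γ) (F : Ser (Option Γ) k) :
    tser σ (tser τ F) = tser (σ * τ) F := by
  funext u
  unfold tser
  rw [List.map_map]
  congr 1
  refine List.map_congr_left fun x _ => ?_
  simp [Option.map_map, Function.comp_def, mul_assoc, mul_inv_rev, mul_comm]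

lemma tser_sinv (σ : Γ) (F : Ser (Option Γ) k) (hF : F [] = 1) :
    tser σ (sinv F) = sinv (tser σ F) := by
  refine eq_sinv_of_smul2 _ _ (by rw [tser_nil]; exact hF) ?_
  rw [← tser_smul2, smul2_sinv F hF, tser_sone]

lemma tser_monom (σ : Γ) (v : List (Option Γ)) :
    tser σ (monom v : Ser (Option Γ) k) = monom (v.map (Option.map (fun τ => σ * τ))) := by
  funext u
  unfold tser monom
  congr 1
  simp only [eq_iff_iff]
  constructor
  · rintro rfl; rw [optmap_cancel]
  · rintro rfl; rw [optmap_cancel']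

lemma tser_kletter (σ : Γ) (G : Ser (Option Γ) k) (hG : G [] = 1) (x : Option Γ) :
    tser σ (kletter G x) = kletter G (Option.map (fun τ => σ * τ) x) := by
  cases x with
  | none =>
      show tser σ (monom [none]) = kletter G none
      rw [tser_monom]
      rfl
  | some τ =>
      show tser σ (smul2 (sinv (tser τ G)) (smul2 (monom [some τ]) (tser τ G))) = _
      rw [tser_smul2, tser_smul2, tser_sinv _ _ (by rw [tser_nil]; exact hG),
        tser_tser, tser_monom]
      rfl

lemma tser_wordProd (σ : Γ) (L : List (Ser (Option Γ) k)) :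
    tser σ (wordProd L) = wordProd (L.map (tser σ)) := by
  induction L with
  | nil => simpa [wordProd] using tser_sone σ
  | cons F L ih =>
      show tser σ (smul2 F (wordProd L)) = smul2 (tser σ F) _
      rw [tser_smul2, ih]

lemma kletter_nil (G : Ser (Option Γ) k) (x : Option Γ) : kletter G x [] = 0 := by
  cases x with
  | none => simp [kletter, monom]
  | some σ =>
      show smul2 (sinv (tser σ G)) (smul2 (monom [some σ]) (tser σ G)) [] = 0
      rw [smul2_nil, smul2_nil]
      simp [monom]

lemma kappa_eq_subst (G F : Ser (Option Γ) k) : kappa G F = subst (kletter G) F := rfl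

lemma tser_kappa (σ : Γ) (G F : Ser (Option Γ) k) (hG : G [] = 1) :
    tser σ (kappa G F) = kappa G (tser σ F) := by
  funext u
  show kappa G F (u.map (Option.map (fun τ => σ⁻¹ * τ))) = _
  unfold kappa
  rw [List.length_map]
  refine Finset.sum_bij' (i := fun w _ => w.map (Option.map (fun τ => σ * τ)))
    (j := fun w _ => w.map (Option.map (fun τ => σ⁻¹ * τ))) ?_ ?_ ?_ ?_ ?_
  · intro w hw
    rw [mem_wordsLe] at hw ⊢
    simpa using hw
  · intro w hw
    rw [mem_wordsLe] at hw ⊢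
    simpa using hw
  · intro w _; exact optmap_cancel' σ w
  · intro w _; exact optmap_cancel σ w
  · intro w _
    have h3 : wordProd ((w.map (Option.map (fun τ => σ * τ))).map (kletter G))
        = tser σ (wordProd (w.map (kletter G))) := by
      rw [tser_wordProd, List.map_map, List.map_map]
      refine congrArg wordProd (List.map_congr_left fun x _ => ?_)
      simp only [Function.comp_apply]
      exact (tser_kletter σ G hG x).symm
    have h2 : wordProd ((w.map (Option.map (fun τ => σ * τ))).map (kletter G)) u
        = wordProd (w.map (kletter G)) (u.map (Option.map (fun τ => σ⁻¹ * τ))) := by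
      rw [h3]; rfl
    have h1 : F w = tser σ F (w.map (Option.map (fun τ => σ * τ))) := by
      unfold tser; rw [optmap_cancel']
    rw [← h1, h2]

lemma kappa_nil (G F : Ser (Option Γ) k) : kappa G F [] = F [] := subst_nil _ _

lemma kappa_sone (G : Ser (Option Γ) k) : kappa G sone = sone := subst_sone _

lemma kappa_mul (G F F' : Ser (Option Γ) k) :
    kappa G (smul2 F F') = smul2 (kappa G F) (kappa G F') :=
  subst_mul (kletter_nil G) F F'

lemma kappa_sinv (G F : Ser (Option Γ) k) (hF : F [] = 1) :
    kappa G (sinv F) = sinv (kappa G F) :=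
  subst_sinv (kletter_nil G) F hF

lemma kletter_sone (x : Option Γ) : kletter (sone : Ser (Option Γ) k) x = monom [x] := by
  cases x with
  | none => rfl
  | some σ =>
      show smul2 (sinv (tser σ sone)) (smul2 (monom [some σ]) (tser σ sone)) = _
      rw [tser_sone, sinv_sone, sone_smul2, smul2_sone]

lemma kappa_id (F : Ser (Option Γ) k) : kappa (sone : Ser (Option Γ) k) F = F := by
  rw [kappa_eq_subst]
  have : (kletter (sone : Ser (Option Γ) k)) = fun x => monom [x] := funext kletter_sone
  rw [this, subst_monomid]

lemma kappa_monom_single (G : Ser (Option Γ) k) (x : Option Γ) :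
    kappa G (monom [x]) = kletter G x := by
  rw [kappa_eq_subst, subst_monom (kletter_nil G)]
  show smul2 (kletter G x) (wordProd []) = kletter G x
  show smul2 (kletter G x) sone = kletter G x
  rw [smul2_sone]

lemma mulMT_nil (G H : Ser (Option Γ) k) : mulMT G H [] = G [] * H [] := by
  show smul2 G (kappa G H) [] = _
  rw [smul2_nil, kappa_nil]

lemma kappa_letter_comp (G H : Ser (Option Γ) k) (hG : G [] = 1) (hH : H [] = 1)
    (x : Option Γ) : kappa G (kletter H x) = kletter (mulMT G H) x := by
  cases x with
  | none =>
      show kappa G (monom [none]) = monom [none]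
      rw [kappa_monom_single]
      rfl
  | some σ =>
      have htH1 : tser σ H [] = 1 := by rw [tser_nil]; exact hH
      have htG1 : tser σ G [] = 1 := by rw [tser_nil]; exact hG
      have hB1 : kappa G (tser σ H) [] = 1 := by rw [kappa_nil]; exact htH1
      show kappa G (smul2 (sinv (tser σ H)) (smul2 (monom [some σ]) (tser σ H)))
        = smul2 (sinv (tser σ (mulMT G H))) (smul2 (monom [some σ]) (tser σ (mulMT G H)))
      have hts : tser σ (mulMT G H) = smul2 (tser σ G) (kappa G (tser σ H)) := by
        show tser σ (smul2 G (kappa G H)) = _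
        rw [tser_smul2, tser_kappa σ G H hG]
      rw [hts, kappa_mul, kappa_mul, kappa_sinv _ _ htH1, kappa_monom_single,
        sinv_smul2_eq _ _ htG1 hB1]
      show smul2 (sinv (kappa G (tser σ H)))
          (smul2 (smul2 (sinv (tser σ G)) (smul2 (monom [some σ]) (tser σ G)))
            (kappa G (tser σ H))) = _
      simp only [smul2_assoc]

lemma kappa_comp (G H F : Ser (Option Γ) k) (hG : G [] = 1) (hH : H [] = 1) :
    kappa (mulMT G H) F = kappa G (kappa H F) := by
  rw [kappa_eq_subst, kappa_eq_subst, kappa_eq_subst,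
    subst_subst (kletter_nil G) (kletter_nil H) F]
  have : (kletter (mulMT G H)) = fun x => subst (kletter G) (kletter H x) := by
    funext x
    rw [← kappa_letter_comp G H hG hH x, kappa_eq_subst]
  rw [this]

lemma mulMT_one_left (G : Ser (Option Γ) k) : mulMT sone G = G := by
  show smul2 sone (kappa sone G) = G
  rw [kappa_id, sone_smul2]

lemma mulMT_one_right (G : Ser (Option Γ) k) : mulMT G sone = G := by
  show smul2 G (kappa G sone) = G
  rw [kappa_sone, smul2_sone]

lemma mulMT_assoc (G H K : Ser (Option Γ) k) (hG : G [] = 1) (hH : H [] = 1) :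
    mulMT (mulMT G H) K = mulMT G (mulMT H K) := by
  show smul2 (smul2 G (kappa G H)) (kappa (mulMT G H) K)
    = smul2 G (kappa G (mulMT H K))
  rw [kappa_comp G H K hG hH, smul2_assoc, ← kappa_mul]
  rfl

lemma smul2_single {X : Type} (F G : Ser X k) (a : X) :
    smul2 F G [a] = F [] * G [a] + F [a] * G [] := by
  show ∑ p ∈ Finset.range 2, F (List.take p [a]) * G (List.drop p [a]) = _
  rw [Finset.sum_range_succ, Finset.sum_range_one]
  rfl

lemma kletter_single (G : Ser (Option Γ) k) (hG : G [] = 1) (x a : Option Γ) :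
    kletter G x [a] = if a = x then 1 else 0 := by
  cases x with
  | none =>
      show monom [none] [a] = _
      simp [monom]
  | some σ =>
      show smul2 (sinv (tser σ G)) (smul2 (monom [some σ]) (tser σ G)) [a] = _
      rw [smul2_single, smul2_single, smul2_nil, sinv_nil]
      simp [monom, tser_nil, hG, tser]

lemma wordProd_kletter_diag (G : Ser (Option Γ) k) (hG : G [] = 1) (w u : List (Option Γ))
    (hlen : w.length = u.length) :
    wordProd (w.map (kletter G)) u = if w = u then 1 else 0 := by
  induction w generalizing u with
  | nil =>
      cases u with
      | nil => simp [wordProd, sone]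
      | cons a u' => simp at hlen
  | cons x w' ih =>
      cases u with
      | nil => simp at hlen
      | cons a u' =>
          have hlen' : w'.length = u'.length := by simpa using hlen
          show smul2 (kletter G x) (wordProd (w'.map (kletter G))) (a :: u') = _
          unfold smul2
          rw [Finset.sum_eq_single 1]
          · have h1 : (a :: u').take 1 = [a] := rfl
            have h2 : (a :: u').drop 1 = u' := rfl
            rw [h1, h2, kletter_single G hG, ih u' hlen']
            by_cases ha : a = x
            · subst ha
              by_cases hw : w' = u' <;> simp [hw, List.cons.injEq]
            · have hx : ¬ x = a := fun h => ha h.symm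
              simp [ha, hx, List.cons.injEq]
          · intro p hp hne
            rcases Nat.eq_zero_or_pos p with h | h
            · subst h
              simp [kletter_nil]
            · have hp2 : 2 ≤ p := by omega
              have hmem := Finset.mem_range.mp hp
              simp only [List.length_cons] at hmem
              rw [wordProd_map_zero (kletter_nil G) _ _ ?_, mul_zero]
              rw [List.length_drop, hlen']
              simp only [List.length_cons]
              omega
          · intro h
            exact absurd (Finset.mem_range.mpr (by simp)) h

lemma kappa_expand (G : Ser (Option Γ) k) (hG : G [] = 1) (F : Ser (Option Γ) k)
    (u : List (Option Γ)) :
    kappa G F u = F u + ∑ w ∈ (wordsLe (Option Γ) u.length).filter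
      (fun w => w.length < u.length), F w * wordProd (w.map (kletter G)) u := by
  unfold kappa
  rw [← Finset.sum_filter_add_sum_filter_not (wordsLe (Option Γ) u.length)
    (fun w => w.length < u.length), add_comm]
  congr 1
  rw [Finset.sum_eq_single u]
  · rw [wordProd_kletter_diag G hG u u rfl, if_pos rfl, mul_one]
  · intro w hw hne
    have h1 := Finset.mem_filter.mp hw
    have h2 := (mem_wordsLe _ _).mp h1.1
    have h3 : w.length = u.length := by
      have := h1.2; simp at this; omega
    rw [wordProd_kletter_diag G hG w u h3, if_neg hne, mul_zero]
  · intro h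
    refine absurd (Finset.mem_filter.mpr ⟨(mem_wordsLe _ _).mpr le_rfl, by simp⟩) h

/-- Explicit inverse of κ_G, defined by strong recursion on the word length. -/
def kinv (G F : Ser (Option Γ) k) : List (Option Γ) → k
  | u => F u - ∑ w ∈ ((wordsLe (Option Γ) u.length).filter
        (fun w => w.length < u.length)).attach,
      kinv G F w.1 * wordProd (w.1.map (kletter G)) u
  termination_by u => u.length
  decreasing_by
    have := (Finset.mem_filter.mp w.2).2
    simpa using this

lemma kinv_eq (G F : Ser (Option Γ) k) (u : List (Option Γ)) :
    kinv G F u = F u - ∑ w ∈ (wordsLe (Option Γ) u.length).filter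
        (fun w => w.length < u.length),
      kinv G F w * wordProd (w.map (kletter G)) u := by
  rw [kinv]
  congr 1
  exact Finset.sum_attach ((wordsLe (Option Γ) u.length).filter
      (fun w => w.length < u.length))
    (fun w => kinv G F w * wordProd (w.map (kletter G)) u)

lemma kinv_nil (G F : Ser (Option Γ) k) : kinv G F [] = F [] := by
  rw [kinv_eq]
  have : ∑ w ∈ (wordsLe (Option Γ) ([] : List (Option Γ)).length).filter
      (fun w => w.length < ([] : List (Option Γ)).length),
      kinv G F w * wordProd (w.map (kletter G)) [] = 0 := by
    refine Finset.sum_eq_zero fun w hw => ?_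
    have := (Finset.mem_filter.mp hw).2
    simp at this
  rw [this, sub_zero]

lemma kappa_kinv (G : Ser (Option Γ) k) (hG : G [] = 1) (F : Ser (Option Γ) k) :
    kappa G (kinv G F) = F := by
  funext u
  rw [kappa_expand G hG, kinv_eq]
  ring

end Gamma
/-- The set of series with constant term 1 is a group under ⊛,
with identity 1, and `G ↦ κ_G` is a homomorphism to the automorphisms of
`k⟨⟨X_Γ⟩⟩`, i.e. `κ_{G ⊛ H} = κ_G ∘ κ_H`. -/
theorem MT_group {Γ k : Type} [CommGroup Γ] [Fintype Γ] [DecidableEq Γ] [CommRing k] :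
    (∀ G H K : Ser (Option Γ) k, G [] = 1 → H [] = 1 → K [] = 1 →
      mulMT (mulMT G H) K = mulMT G (mulMT H K)) ∧
    (∀ G H : Ser (Option Γ) k, G [] = 1 → H [] = 1 → mulMT G H [] = 1) ∧
    (∀ G : Ser (Option Γ) k, G [] = 1 → mulMT sone G = G ∧ mulMT G sone = G) ∧
    (∀ G : Ser (Option Γ) k, G [] = 1 →
      ∃ G' : Ser (Option Γ) k, G' [] = 1 ∧ mulMT G G' = sone ∧ mulMT G' G = sone) ∧
    (∀ G H F : Ser (Option Γ) k, G [] = 1 → H [] = 1 →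
      kappa (mulMT G H) F = kappa G (kappa H F)) := by
  refine ⟨?_, ?_, ?_, ?_, ?_⟩
  · intro G H K hG hH _
    exact mulMT_assoc G H K hG hH
  · intro G H hG hH
    rw [mulMT_nil, hG, hH, one_mul]
  · intro G _
    exact ⟨mulMT_one_left G, mulMT_one_right G⟩
  · intro G hG
    set G' := kinv G (sinv G) with hG'def
    have hG' : G' [] = 1 := by rw [hG'def, kinv_nil, sinv_nil]
    have hright : mulMT G G' = sone := by
      show smul2 G (kappa G G') = sone
      rw [hG'def, kappa_kinv G hG, smul2_sinv G hG]
    set G'' := kinv G' (sinv G') with hG''def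
    have hG'' : G'' [] = 1 := by rw [hG''def, kinv_nil, sinv_nil]
    have hr2 : mulMT G' G'' = sone := by
      show smul2 G' (kappa G' G'') = sone
      rw [hG''def, kappa_kinv G' hG', smul2_sinv G' hG']
    have h1 : (mulMT G' G) [] = 1 := by rw [mulMT_nil, hG', hG, one_mul]
    refine ⟨G', hG', hright, ?_⟩
    calc mulMT G' G
        = mulMT (mulMT G' G) sone := (mulMT_one_right _).symm
      _ = mulMT (mulMT G' G) (mulMT G' G'') := by rw [hr2]
      _ = mulMT (mulMT (mulMT G' G) G') G'' := (mulMT_assoc _ _ _ h1 hG').symm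
      _ = mulMT (mulMT G' (mulMT G G')) G'' := by rw [mulMT_assoc G' G G' hG' hG]
      _ = mulMT (mulMT G' sone) G'' := by rw [hright]
      _ = mulMT G' G'' := by rw [mulMT_one_right]
      _ = sone := hr2
  · intro G H F hG hH
    exact kappa_comp G H F hG hH
end

section
/- Let (k⟨⟨X⟩⟩, ⊛) be a complete filtered group (filtration by weight) and suppose S ⊆ k⟨⟨X⟩⟩ is a nonempty set defined as the limit of truncations S⁽ⁿ⁾ ⊆ k⟨X⟩⁽ⁿ⁾ such that: (i) a group G acts on each S⁽ⁿ⁾ compatibly with the projections, and (ii) for each n, given Φ ∈ S⁽ⁿ⁾, any two lifts of Φ to S⁽ⁿ⁺¹⁾ differ by the action of an element of G which is trivial modulo weight n+1 and acts by addition of a homogeneous weight-(n+1) element. Then if G acts transitively on S⁽¹⁾, G acts transitively on S. -/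
/-- Successive-approximation transitivity. Let `S ⊆ lim← A n` be the
limit of truncations `S n ⊆ A n` along projections `p n : A (n+1) → A n`, and let a
compatible tower of groups `G n` (with surjective transition morphisms `q n`) act on
the levels, preserving each `S n` and commuting with the projections. Assume that any
two elements of `S (n+1)` lying over the same element of `S n` differ by the action of
an element of `G (n+1)` which is trivial modulo weight `n+1` (i.e. projects to the
identity of `G n`). Then if the action is transitive on the lowest truncation, the
limit group acts transitively on `S`. -/
theorem successive_approximation_transitivity
    (A : ℕ → Type*) (G : ℕ → Type*) [∀ n, Group (G n)]
    (p : ∀ n, A (n + 1) → A n) (q : ∀ n, G (n + 1) →* G n)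
    (act : ∀ n, G n → A n → A n)
    (hact_one : ∀ n (a : A n), act n 1 a = a)
    (hact_mul : ∀ n (g h : G n) (a : A n), act n (g * h) a = act n g (act n h a))
    (S : ∀ n, Set (A n))
    (hcompat : ∀ n (g : G (n + 1)) (a : A (n + 1)),
      p n (act (n + 1) g a) = act n (q n g) (p n a))
    (hSinv : ∀ n (g : G n), ∀ a ∈ S n, act n g a ∈ S n)
    (hq_surj : ∀ n, Function.Surjective (q n))
    (hdiff : ∀ n, ∀ x ∈ S (n + 1), ∀ y ∈ S (n + 1), p n x = p n y →
      ∃ g : G (n + 1), q n g = 1 ∧ act (n + 1) g x = y)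
    (htrans₀ : ∀ x ∈ S 0, ∀ y ∈ S 0, ∃ g : G 0, act 0 g x = y)
    (f f' : ∀ n, A n)
    (hf : ∀ n, f n ∈ S n) (hfc : ∀ n, p n (f (n + 1)) = f n)
    (hf' : ∀ n, f' n ∈ S n) (hfc' : ∀ n, p n (f' (n + 1)) = f' n) :
    ∃ γ : ∀ n, G n, (∀ n, q n (γ (n + 1)) = γ n) ∧ ∀ n, act n (γ n) (f n) = f' n := by
  have key : ∀ n (g : G n), act n g (f n) = f' n →
      ∃ g' : G (n + 1), q n g' = g ∧ act (n + 1) g' (f (n + 1)) = f' (n + 1) := by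
    intro n g hg
    obtain ⟨g₀, hg₀⟩ := hq_surj n g
    have hx : act (n + 1) g₀ (f (n + 1)) ∈ S (n + 1) := hSinv _ _ _ (hf _)
    have hproj : p n (act (n + 1) g₀ (f (n + 1))) = p n (f' (n + 1)) := by
      rw [hcompat, hg₀, hfc, hg, hfc']
    obtain ⟨h, hh1, hh2⟩ := hdiff n _ hx _ (hf' _) hproj
    exact ⟨h * g₀, by rw [map_mul, hh1, hg₀, one_mul],
      by rw [hact_mul, hh2]⟩
  choose step hstep1 hstep2 using key
  obtain ⟨g0, hg0⟩ := htrans₀ (f 0) (hf 0) (f' 0) (hf' 0)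
  let Γ : ∀ n, {g : G n // act n g (f n) = f' n} :=
    fun n => Nat.rec ⟨g0, hg0⟩
      (fun m ih => ⟨step m ih.1 ih.2, hstep2 m ih.1 ih.2⟩) n
  exact ⟨fun n => (Γ n).1, fun n => hstep1 n (Γ n).1 (Γ n).2, fun n => (Γ n).2⟩
end
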